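/- arXiv:2104.08562 — 6 statements merged into one kernel-verified Lean document; each statement's English description precedes it below -/
import Mathlib

section
/- Let (A_i, B_i) for i = 1,…,m be finite sets with A_i ∩ B_i = ∅ for all i and A_i ∩ B_j ≠ ∅ for all i ≠ j (a cross intersecting set pair system). Then ∑_{i=1}^m 1 / C(|A_i| + |B_i|, |A_i|) ≤ 1. -/
/-!
Induction on a ground set `X` containing all the sets. For `x ∈ X`, the pairs with `x ∉ Aᵢ`,
with `x` erased from `Bᵢ`, form a cross-intersecting system on `X.erase x`, so by induction their
weights `1 / C(|Aᵢ| + |Bᵢ \ {x}|, |Aᵢ|)` sum to at most `1`. Summing over `x ∈ X`, each pair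
contributes exactly `|X|` times its own weight, whence `|X| · ∑ᵢ 1 / C(|Aᵢ| + |Bᵢ|, |Aᵢ|) ≤ |X|`.
-/

open Finset

section

variable {α ι : Type*}

def setPairWeight (s t : Finset α) : ℚ := 1 / ((#s + #t).choose #s)

lemma setPairWeight_le_one (s t : Finset α) : setPairWeight s t ≤ 1 := by
  have : (1 : ℚ) ≤ (#s + #t).choose #s := by exact_mod_cast Nat.choose_pos (by omega)
  exact div_le_one_of_le₀ this (by positivity)

lemma succ_mul_one_div_choose (a b : ℕ) :
    ((b + 1 : ℕ) : ℚ) * (1 / (a + b).choose a) =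
      ((a + (b + 1) : ℕ) : ℚ) * (1 / (a + (b + 1)).choose a) := by
  have key : ((a + b).choose a : ℚ) * (a + b + 1) = (a + b + 1).choose a * (b + 1) := by
    have := Nat.choose_mul_succ_eq (a + b) a
    rw [show a + b + 1 - a = b + 1 by omega] at this
    exact_mod_cast this
  have h₁ : ((a + b).choose a : ℚ) ≠ 0 := by exact_mod_cast (Nat.choose_pos (by omega)).ne'
  have h₂ : ((a + b + 1).choose a : ℚ) ≠ 0 := by exact_mod_cast (Nat.choose_pos (by omega)).ne'
  rw [← add_assoc]
  push_cast
  rw [mul_one_div, mul_one_div, div_eq_div_iff h₁ h₂]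
  linear_combination -key

variable [DecidableEq α]

structure IsCrossIntersecting (A B : ι → Finset α) : Prop where
  disjoint : ∀ i, Disjoint (A i) (B i)
  inter_nonempty : ∀ i j, i ≠ j → (A i ∩ B j).Nonempty

/-- Erasing a point of `t` multiplies the weight by `(#s + #t) / #t`; erasing a point outside
`s ∪ t` leaves it unchanged. -/
lemma sum_setPairWeight_erase {s t X : Finset α} (hst : Disjoint s t) (hsX : s ⊆ X)
    (htX : t ⊆ X) (ht : t.Nonempty) :
    ∑ x ∈ X \ s, setPairWeight s (t.erase x) = #X * setPairWeight s t := by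
  have htXs : t ⊆ X \ s := subset_sdiff.mpr ⟨htX, hst.symm⟩
  have hcard : #((X \ s) \ t) + #s + #t = #X := by
    rw [add_right_comm, card_sdiff_add_card_eq_card htXs, card_sdiff_add_card_eq_card hsX]
  obtain ⟨b, hb⟩ : ∃ b, #t = b + 1 := Nat.exists_eq_add_one.mpr ht.card_pos
  have on_t : ∀ x ∈ t, setPairWeight s (t.erase x) = 1 / (#s + b).choose #s := by
    intro x hx
    rw [setPairWeight, card_erase_of_mem hx, hb, Nat.add_sub_cancel]
  have off_t : ∀ x ∈ (X \ s) \ t, setPairWeight s (t.erase x) = setPairWeight s t := by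
    intro x hx
    rw [erase_eq_of_notMem (mem_sdiff.mp hx).2]
  rw [← sum_sdiff htXs, sum_congr rfl on_t, sum_congr rfl off_t, sum_const, sum_const,
    nsmul_eq_mul, nsmul_eq_mul, hb, succ_mul_one_div_choose, ← hb, ← hcard]
  unfold setPairWeight
  push_cast
  ring

namespace IsCrossIntersecting

variable {A B : ι → Finset α}

lemma nonempty_right [Nontrivial ι] (h : IsCrossIntersecting A B) (i : ι) : (B i).Nonempty := by
  obtain ⟨j, hj⟩ := exists_ne i
  exact (h.inter_nonempty j i hj).mono inter_subset_right

lemma restrict (h : IsCrossIntersecting A B) (x : α) :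
    IsCrossIntersecting (fun i : {i // x ∉ A i} => A i) (fun i => (B i).erase x) where
  disjoint i := (h.disjoint i).mono_right (erase_subset _ _)
  inter_nonempty i j hij := by
    obtain ⟨y, hy⟩ := h.inter_nonempty i j (Subtype.coe_ne_coe.mpr hij)
    obtain ⟨hyA, hyB⟩ := mem_inter.mp hy
    exact ⟨y, mem_inter.mpr ⟨hyA, mem_erase.mpr ⟨fun hxy => i.2 (hxy ▸ hyA), hyB⟩⟩⟩

variable [Fintype ι]

lemma sum_sum_setPairWeight_erase [Nontrivial ι] (h : IsCrossIntersecting A B) {X : Finset α}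
    (hAX : ∀ i, A i ⊆ X) (hBX : ∀ i, B i ⊆ X) :
    ∑ x ∈ X, ∑ i with x ∉ A i, setPairWeight (A i) ((B i).erase x) =
      #X * ∑ i, setPairWeight (A i) (B i) := by
  rw [sum_comm' (t' := univ) (s' := fun i => X \ A i) (by simp [and_comm]), mul_sum]
  exact sum_congr rfl fun i _ =>
    sum_setPairWeight_erase (h.disjoint i) (hAX i) (hBX i) (h.nonempty_right i)

theorem sum_setPairWeight_le_one (h : IsCrossIntersecting A B) {X : Finset α}
    (hAX : ∀ i, A i ⊆ X) (hBX : ∀ i, B i ⊆ X) :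
    ∑ i, setPairWeight (A i) (B i) ≤ 1 := by
  induction X using Finset.strongInduction generalizing ι with
  | H X ih =>
  rcases subsingleton_or_nontrivial ι with hι | hι
  · calc ∑ i, setPairWeight (A i) (B i) ≤ ∑ _i : ι, 1 :=
          sum_le_sum fun i _ => setPairWeight_le_one _ _
      _ ≤ 1 := by simpa using Fintype.card_le_one_iff_subsingleton.mpr hι
  have hX : 0 < #X := card_pos.mpr ((h.nonempty_right (Classical.arbitrary ι)).mono (hBX _))
  have ih_at : ∀ x ∈ X, ∑ i with x ∉ A i, setPairWeight (A i) ((B i).erase x) ≤ 1 := by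
    intro x hx
    rw [sum_subtype _ (p := fun i => x ∉ A i) (by simp)]
    exact ih (X.erase x) (erase_ssubset hx) (h.restrict x)
      (fun i => subset_erase.mpr ⟨hAX i, i.2⟩) (fun i => erase_subset_erase x (hBX i))
  have : (#X : ℚ) * ∑ i, setPairWeight (A i) (B i) ≤ #X * 1 := by
    calc (#X : ℚ) * ∑ i, setPairWeight (A i) (B i)
        = ∑ x ∈ X, ∑ i with x ∉ A i, setPairWeight (A i) ((B i).erase x) :=
          (h.sum_sum_setPairWeight_erase hAX hBX).symm
      _ ≤ ∑ _x ∈ X, 1 := sum_le_sum ih_at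
      _ = #X * 1 := by simp
  exact le_of_mul_le_mul_left this (by exact_mod_cast hX)

end IsCrossIntersecting

end

theorem stmt_6 {α : Type*} [DecidableEq α] (m : ℕ) (A B : Fin m → Finset α)
    (hdisj : ∀ i, A i ∩ B i = ∅)
    (hcross : ∀ i j, i ≠ j → (A i ∩ B j).Nonempty) :
    ∑ i, (1 : ℚ) / (((A i).card + (B i).card).choose (A i).card) ≤ 1 :=
  IsCrossIntersecting.sum_setPairWeight_le_one
    ⟨fun i => disjoint_iff_inter_eq_empty.mpr (hdisj i), hcross⟩
    (fun i => subset_biUnion_of_mem (fun i => A i ∪ B i) (mem_univ i) |>.trans' subset_union_left)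
    (fun i => subset_biUnion_of_mem (fun i => A i ∪ B i) (mem_univ i) |>.trans' subset_union_right)
end

section
/- If a ≥ 1, b ≥ 1 and {(A_i, B_i)}_{i=1}^m is a cross intersecting set pair system with |A_i| ≤ a and |B_i| ≤ b for all i, then m ≤ C(a+b, a). -/
open Finset

private lemma choose_aux (p q d : ℕ) : (p + q).choose p ≤ (p + d + q).choose (p + d) := by
  induction d with
  | zero => simp
  | succ d ih =>
    have h1 : p + (d+1) + q = (p + d + q) + 1 := by omega
    have h2 : p + (d+1) = (p + d) + 1 := by omega
    rw [h1, h2, Nat.choose_succ_succ]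
    exact le_trans ih (Nat.le_add_right _ _)

private lemma choose_le_choose_both {p q a b : ℕ} (hp : p ≤ a) (hq : q ≤ b) :
    (p + q).choose p ≤ (a + b).choose a := by
  obtain ⟨d, rfl⟩ := Nat.exists_eq_add_of_le hp
  exact le_trans (choose_aux p q d) (Nat.choose_le_choose _ (by omega))

private lemma exists_bottom {γ δ : Type*} [DecidableEq γ] [LinearOrder δ] (f : γ → δ) :
    ∀ (p : ℕ) (s : Finset γ), Set.InjOn f s → p ≤ s.card →
      ∃ T, T ⊆ s ∧ T.card = p ∧ ∀ x ∈ T, ∀ y ∈ s \ T, f x < f y := by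
  intro p
  induction p with
  | zero => exact fun s _ _ => ⟨∅, empty_subset _, card_empty, by simp⟩
  | succ p ih =>
    intro s hinj hp
    obtain ⟨T, hTs, hTcard, hT⟩ := ih s hinj (le_trans (Nat.le_succ _) hp)
    have hne : (s \ T).Nonempty := by
      rw [← card_pos, card_sdiff_of_subset hTs]; omega
    obtain ⟨y0, hy0, hy0min⟩ := (s \ T).exists_min_image f hne
    have hy0s : y0 ∈ s := (mem_sdiff.mp hy0).1
    have hy0T : y0 ∉ T := (mem_sdiff.mp hy0).2
    refine ⟨insert y0 T, ?_, ?_, ?_⟩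
    · exact insert_subset hy0s hTs
    · rw [card_insert_of_notMem hy0T, hTcard]
    · intro x hx y hy
      have hys : y ∈ s := (mem_sdiff.mp hy).1
      have hyT' : y ∉ insert y0 T := (mem_sdiff.mp hy).2
      have hyT : y ∉ T := fun h => hyT' (mem_insert_of_mem h)
      rcases mem_insert.mp hx with rfl | hxT
      · have hle : f x ≤ f y := hy0min y (mem_sdiff.mpr ⟨hys, hyT⟩)
        rcases lt_or_eq_of_le hle with h | h
        · exact h
        · exact absurd (hinj hy0s hys h) (fun he => hyT' (he ▸ mem_insert_self _ _))
      · exact hT x hxT y (mem_sdiff.mpr ⟨hys, hyT⟩)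


private lemma exists_perm_maps {γ : Type*} [DecidableEq γ] [Fintype γ] (C D T S : Finset γ)
    (hCD : Disjoint C D) (hTS : Disjoint T S) (hU : C ∪ D = T ∪ S) (hCT : C.card = T.card) :
    ∃ e : Equiv.Perm γ, (∀ x ∈ C, e x ∈ T) ∧ (∀ x ∈ D, e x ∈ S) := by
  classical
  have hDS : D.card = S.card := by
    have h1 := card_union_of_disjoint hCD
    have h2 := card_union_of_disjoint hTS
    rw [hU, h2] at h1; omega
  let e1 : (C : Finset γ) ≃ T := Finset.equivOfCardEq hCT
  let e2 : (D : Finset γ) ≃ S := Finset.equivOfCardEq hDS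
  let f : γ → γ := fun x =>
    if h : x ∈ C then (e1 ⟨x, h⟩ : γ) else if h : x ∈ D then (e2 ⟨x, h⟩ : γ) else x
  have hfC : ∀ x (h : x ∈ C), f x = (e1 ⟨x, h⟩ : γ) := fun x h => dif_pos h
  have hfD : ∀ x (h : x ∈ D), f x = (e2 ⟨x, h⟩ : γ) := by
    intro x h
    have hxC : x ∉ C := disjoint_right.mp hCD h
    simp only [f, dif_neg hxC, dif_pos h]
  have hfO : ∀ x, x ∉ C → x ∉ D → f x = x := by
    intro x h1 h2; simp only [f, dif_neg h1, dif_neg h2]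
  have hmemT : ∀ x (h : x ∈ C), f x ∈ T := fun x h => hfC x h ▸ (e1 ⟨x, h⟩).2
  have hmemS : ∀ x (h : x ∈ D), f x ∈ S := fun x h => hfD x h ▸ (e2 ⟨x, h⟩).2
  have hfxT : ∀ x, f x ∈ T → x ∈ C := by
    intro x hx
    by_contra hxC
    by_cases hxD : x ∈ D
    · exact disjoint_left.mp hTS hx (hmemS x hxD)
    · have : x ∈ T ∪ S := hfO x hxC hxD ▸ mem_union_left _ hx
      rw [← hU] at this
      rcases mem_union.mp this with h | h
      · exact hxC h
      · exact hxD h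
  have hfxS : ∀ x, f x ∈ S → x ∈ D := by
    intro x hx
    by_cases hxC : x ∈ C
    · exact absurd (hmemT x hxC) (disjoint_right.mp hTS hx)
    by_contra hxD
    have : x ∈ T ∪ S := hfO x hxC hxD ▸ mem_union_right _ hx
    rw [← hU] at this
    rcases mem_union.mp this with h | h
    · exact hxC h
    · exact hxD h
  have hinj : Function.Injective f := by
    intro x y hxy
    by_cases hxC : x ∈ C
    · have hyC : y ∈ C := hfxT y (hxy ▸ hmemT x hxC)
      have h1 : (e1 ⟨x, hxC⟩ : γ) = (e1 ⟨y, hyC⟩ : γ) := by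
        rw [← hfC x hxC, ← hfC y hyC, hxy]
      have h2 := e1.injective (Subtype.coe_injective h1)
      exact congrArg Subtype.val h2
    · by_cases hxD : x ∈ D
      · have hyD : y ∈ D := hfxS y (hxy ▸ hmemS x hxD)
        have h1 : (e2 ⟨x, hxD⟩ : γ) = (e2 ⟨y, hyD⟩ : γ) := by
          rw [← hfD x hxD, ← hfD y hyD, hxy]
        have h2 := e2.injective (Subtype.coe_injective h1)
        exact congrArg Subtype.val h2
      · have hfx : f x = x := hfO x hxC hxD
        by_cases hyC : y ∈ C
        · exact absurd (hfx ▸ hxy ▸ hmemT y hyC : x ∈ T)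
            (fun h => hxC (by
              have : x ∈ T ∪ S := mem_union_left _ h
              rw [← hU] at this
              rcases mem_union.mp this with h' | h'
              · exact h'
              · exact absurd h' hxD))
        · by_cases hyD : y ∈ D
          · exact absurd (hfx ▸ hxy ▸ hmemS y hyD : x ∈ S)
              (fun h => hxD (by
                have : x ∈ T ∪ S := mem_union_right _ h
                rw [← hU] at this
                rcases mem_union.mp this with h' | h'
                · exact absurd h' hxC
                · exact h'))
          · rw [hfx, hfO y hyC hyD] at hxy; exact hxy
  exact ⟨Equiv.ofBijective f (Finite.injective_iff_bijective.mp hinj), hmemT, hmemS⟩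




private lemma perm_count {n : ℕ} (C D : Finset (Fin n)) (hCD : Disjoint C D) :
    n.factorial ≤ (Finset.univ.filter
        (fun σ : Equiv.Perm (Fin n) => ∀ x ∈ C, ∀ y ∈ D, σ x < σ y)).card
      * (C.card + D.card).choose C.card := by
  classical
  set p := C.card with hp
  set U := C ∪ D with hUdef
  have hUcard : U.card = p + D.card := card_union_of_disjoint hCD
  have hpU : p ≤ U.card := by omega
  -- canonical permutation for each pattern T
  let H : Finset (Fin n) → Equiv.Perm (Fin n) := fun T =>
    if h : T ⊆ U ∧ T.card = p then
      (exists_perm_maps C D T (U \ T) hCD disjoint_sdiff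
        (by rw [union_sdiff_of_subset h.1])
        (by rw [h.2])).choose
    else 1
  have Hspec : ∀ T (h : T ⊆ U ∧ T.card = p),
      (∀ x ∈ C, H T x ∈ T) ∧ (∀ x ∈ D, H T x ∈ U \ T) := by
    intro T h
    simp only [H, dif_pos h]
    exact (exists_perm_maps C D T (U \ T) hCD disjoint_sdiff
        (by rw [union_sdiff_of_subset h.1]) (by rw [h.2])).choose_spec
  -- pattern of a permutation
  let Tset : Equiv.Perm (Fin n) → Finset (Fin n) := fun σ =>
    (exists_bottom (⇑σ) p U (σ.injective.injOn) hpU).choose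
  have Tspec : ∀ σ : Equiv.Perm (Fin n),
      Tset σ ⊆ U ∧ (Tset σ).card = p ∧ ∀ x ∈ Tset σ, ∀ y ∈ U \ Tset σ, σ x < σ y :=
    fun σ => (exists_bottom (⇑σ) p U (σ.injective.injOn) hpU).choose_spec
  let F : Equiv.Perm (Fin n) → Equiv.Perm (Fin n) × Finset (Fin n) := fun σ =>
    (σ * H (Tset σ), Tset σ)
  have hmaps : ∀ σ : Equiv.Perm (Fin n), F σ ∈
      (Finset.univ.filter
        (fun σ : Equiv.Perm (Fin n) => ∀ x ∈ C, ∀ y ∈ D, σ x < σ y)) ×ˢ U.powersetCard p := by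
    intro σ
    obtain ⟨hsub, hcard, hbot⟩ := Tspec σ
    obtain ⟨hHC, hHD⟩ := Hspec (Tset σ) ⟨hsub, hcard⟩
    refine mem_product.mpr ⟨mem_filter.mpr ⟨mem_univ _, ?_⟩, mem_powersetCard.mpr ⟨hsub, hcard⟩⟩
    intro x hx y hy
    exact hbot _ (hHC x hx) _ (hHD y hy)
  have hinj : Set.InjOn F (Finset.univ : Finset (Equiv.Perm (Fin n))) := by
    intro σ1 _ σ2 _ h
    have h2 : Tset σ1 = Tset σ2 := congrArg Prod.snd h
    have h1 : σ1 * H (Tset σ1) = σ2 * H (Tset σ2) := congrArg Prod.fst h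
    rw [h2] at h1
    exact mul_right_cancel h1
  have hcard := Finset.card_le_card_of_injOn F (fun σ _ => hmaps σ) hinj
  rw [Finset.card_product, Finset.card_powersetCard, hUcard] at hcard
  calc n.factorial = Fintype.card (Equiv.Perm (Fin n)) := by
        rw [Fintype.card_perm, Fintype.card_fin]
    _ = (Finset.univ : Finset (Equiv.Perm (Fin n))).card := (Finset.card_univ).symm
    _ ≤ _ := hcard




private lemma bollobas_fin {n a b m : ℕ} (C D : Fin m → Finset (Fin n))
    (hdisj : ∀ i, Disjoint (C i) (D i))
    (hcross : ∀ i j, i ≠ j → (C i ∩ D j).Nonempty)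
    (hne : ∀ i, (C i).Nonempty ∧ (D i).Nonempty)
    (hC : ∀ i, (C i).card ≤ a) (hD : ∀ i, (D i).card ≤ b) : m ≤ (a + b).choose a := by
  classical
  set P : Fin m → Finset (Equiv.Perm (Fin n)) := fun i =>
    Finset.univ.filter (fun σ => ∀ x ∈ C i, ∀ y ∈ D i, σ x < σ y) with hP
  have key : ∀ i j, i ≠ j → ∀ σ, σ ∈ P i → σ ∈ P j →
      ((C i).image σ).max' ((hne i).1.image σ) ≤ ((C j).image σ).max' ((hne j).1.image σ) →
      False := by
    intro i j hij σ hi hj hle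
    obtain ⟨x, hx⟩ := hcross i j hij
    have hxCi : x ∈ C i := (mem_inter.mp hx).1
    have hxDj : x ∈ D j := (mem_inter.mp hx).2
    have hσi := (mem_filter.mp hi).2
    have hσj := (mem_filter.mp hj).2
    obtain ⟨c, hc, hceq⟩ := mem_image.mp (((C j).image σ).max'_mem ((hne j).1.image σ))
    have h1 : σ x ≤ ((C i).image σ).max' ((hne i).1.image σ) :=
      le_max' _ _ (mem_image_of_mem σ hxCi)
    have h2 : ((C j).image σ).max' ((hne j).1.image σ) < σ x := hceq ▸ hσj c hc x hxDj
    exact absurd (lt_of_le_of_lt (le_trans h1 hle) h2) (lt_irrefl _)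
  have hdisjP : ∀ i j, i ≠ j → Disjoint (P i) (P j) := by
    intro i j hij
    rw [Finset.disjoint_left]
    intro σ hi hj
    rcases le_total (((C i).image σ).max' ((hne i).1.image σ))
        (((C j).image σ).max' ((hne j).1.image σ)) with h | h
    · exact key i j hij σ hi hj h
    · exact key j i (Ne.symm hij) σ hj hi h
  have hsum : ∑ i : Fin m, (P i).card ≤ n.factorial := by
    rw [← Finset.card_biUnion (fun i _ j _ hij => hdisjP i j hij)]
    calc ((Finset.univ : Finset (Fin m)).biUnion P).card
        ≤ (Finset.univ : Finset (Equiv.Perm (Fin n))).card := card_le_card (subset_univ _)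
      _ = n.factorial := by rw [Finset.card_univ, Fintype.card_perm, Fintype.card_fin]
  have hper : ∀ i, n.factorial ≤ (P i).card * ((a + b).choose a) := by
    intro i
    refine le_trans (perm_count (C i) (D i) (hdisj i)) ?_
    exact Nat.mul_le_mul_left _ (choose_le_choose_both (hC i) (hD i))
  have hfinal : m * n.factorial ≤ n.factorial * ((a + b).choose a) := by
    calc m * n.factorial = ∑ _i : Fin m, n.factorial := by
          rw [Finset.sum_const, Finset.card_univ, Fintype.card_fin, smul_eq_mul, mul_comm]
      _ ≤ ∑ i : Fin m, (P i).card * ((a + b).choose a) := Finset.sum_le_sum (fun i _ => hper i)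
      _ = (∑ i : Fin m, (P i).card) * ((a + b).choose a) := by rw [Finset.sum_mul]
      _ ≤ n.factorial * ((a + b).choose a) := Nat.mul_le_mul_right _ hsum
  have hfac : 0 < n.factorial := Nat.factorial_pos n
  rw [mul_comm (n.factorial)] at hfinal
  exact Nat.le_of_mul_le_mul_right hfinal hfac



theorem stmt_7 {α : Type*} [DecidableEq α] (a b m : ℕ) (ha : 1 ≤ a) (hb : 1 ≤ b)
    (A B : Fin m → Finset α)
    (hdisj : ∀ i, A i ∩ B i = ∅)
    (hcross : ∀ i j, i ≠ j → (A i ∩ B j).Nonempty)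
    (hA : ∀ i, (A i).card ≤ a) (hB : ∀ i, (B i).card ≤ b) :
    m ≤ (a + b).choose a := by
  classical
  rcases le_or_gt m 1 with hm | hm
  · exact le_trans hm (Nat.choose_pos (Nat.le_add_right a b))
  -- m ≥ 2
  set t : Finset α := Finset.univ.biUnion (fun i => A i ∪ B i) with ht
  have hsubA : ∀ i, A i ⊆ t := fun i =>
    subset_trans subset_union_left (subset_biUnion_of_mem (fun i => A i ∪ B i) (mem_univ i))
  have hsubB : ∀ i, B i ⊆ t := fun i =>
    subset_trans subset_union_right (subset_biUnion_of_mem (fun i => A i ∪ B i) (mem_univ i))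
  have hne01 : (⟨0, by omega⟩ : Fin m) ≠ ⟨1, by omega⟩ := by
    intro h; simpa using congrArg Fin.val h
  obtain ⟨z0, hz0⟩ := hcross _ _ hne01
  have hz0t : z0 ∈ t := hsubA _ (mem_inter.mp hz0).1
  set n : ℕ := t.card with hn
  let e : {x // x ∈ t} ≃ Fin n := Fintype.equivFinOfCardEq (Fintype.card_coe t)
  let g : α → Fin n := fun x => if h : x ∈ t then e ⟨x, h⟩ else e ⟨z0, hz0t⟩
  have hg : ∀ x (h : x ∈ t), g x = e ⟨x, h⟩ := fun x h => dif_pos h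
  have hginj : Set.InjOn g (t : Set α) := by
    intro x hx y hy hxy
    rw [hg x hx, hg y hy] at hxy
    exact congrArg Subtype.val (e.injective hxy)
  let C : Fin m → Finset (Fin n) := fun i => (A i).image g
  let D : Fin m → Finset (Fin n) := fun i => (B i).image g
  have hCcard : ∀ i, (C i).card = (A i).card := fun i =>
    card_image_of_injOn (hginj.mono (by exact_mod_cast hsubA i))
  have hDcard : ∀ i, (D i).card = (B i).card := fun i =>
    card_image_of_injOn (hginj.mono (by exact_mod_cast hsubB i))
  refine bollobas_fin C D ?_ ?_ ?_ (fun i => (hCcard i).le.trans (hA i))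
    (fun i => (hDcard i).le.trans (hB i))
  · intro i
    rw [Finset.disjoint_left]
    rintro w hw hw'
    obtain ⟨x, hx, hxw⟩ := mem_image.mp hw
    obtain ⟨y, hy, hyw⟩ := mem_image.mp hw'
    have hxy : x = y := hginj (hsubA i hx) (hsubB i hy) (hxw.trans hyw.symm)
    have : x ∈ A i ∩ B i := mem_inter.mpr ⟨hx, hxy ▸ hy⟩
    rw [hdisj i] at this
    exact notMem_empty _ this
  · intro i j hij
    obtain ⟨x, hx⟩ := hcross i j hij
    exact ⟨g x, mem_inter.mpr ⟨mem_image_of_mem g (mem_inter.mp hx).1,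
      mem_image_of_mem g (mem_inter.mp hx).2⟩⟩
  · intro i
    have hji : ∀ i : Fin m, ∃ j, j ≠ i := by
      intro i
      refine ⟨if h : i.val = 0 then ⟨1, by omega⟩ else ⟨0, by omega⟩, ?_⟩
      split <;> (rename_i h; intro he; rw [Fin.ext_iff] at he; simp at he; omega)
    obtain ⟨j, hj⟩ := hji i
    obtain ⟨x, hx⟩ := hcross i j hj.symm
    obtain ⟨y, hy⟩ := hcross j i hj
    exact ⟨⟨g x, mem_image_of_mem g (mem_inter.mp hx).1⟩,
      ⟨g y, mem_image_of_mem g (mem_inter.mp hy).2⟩⟩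
end

section
/- Let {(A_i, B_i)}_{i=1}^m be a 1-cross intersecting set pair system with |A_i| ≤ 2 and |B_i| ≤ 2 for all i. Then m ≤ 5. -/
open Finset

section Aux

variable {α : Type*} [DecidableEq α]

lemma two_mem_eq {s : Finset α} {x y : α} (hs : s.card ≤ 2)
    (hx : x ∈ s) (hy : y ∈ s) (hxy : x ≠ y) : s = {x, y} := by
  have hsub : ({x, y} : Finset α) ⊆ s := by
    intro z hz
    rcases Finset.mem_insert.mp hz with rfl | hz
    · exact hx
    · rw [Finset.mem_singleton] at hz; subst hz; exact hy
  have hcard : ({x, y} : Finset α).card = 2 := Finset.card_pair hxy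
  exact (Finset.eq_of_subset_of_card_le hsub (by rw [hcard]; exact hs)).symm

lemma mem_pair_eq {s : Finset α} (hs : s.card ≤ 2) {x a b : α}
    (hx : x ∈ s) (ha : a ∈ s) (hb : b ∈ s) (hax : a ≠ x) (hbx : b ≠ x) : a = b := by
  by_contra hab
  have hsub : ({x, a, b} : Finset α) ⊆ s := by
    intro z hz
    simp only [Finset.mem_insert, Finset.mem_singleton] at hz
    rcases hz with rfl | rfl | rfl <;> assumption
  have h3 : ({x, a, b} : Finset α).card = 3 := by
    rw [Finset.card_insert_of_notMem, Finset.card_pair hab]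
    simp only [Finset.mem_insert, Finset.mem_singleton]
    rintro (rfl | rfl)
    exacts [hax rfl, hbx rfl]
  have := Finset.card_le_card hsub
  omega

lemma three_in_two {s : Finset α} (hs : s.card ≤ 2) {a b c : α}
    (ha : a ∈ s) (hb : b ∈ s) (hc : c ∈ s) : a = b ∨ a = c ∨ b = c := by
  by_contra h
  push_neg at h
  obtain ⟨h1, h2, h3⟩ := h
  have hsub : ({a, b, c} : Finset α) ⊆ s := by
    intro z hz
    simp only [Finset.mem_insert, Finset.mem_singleton] at hz
    rcases hz with rfl | rfl | rfl <;> assumption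
  have h3' : ({a, b, c} : Finset α).card = 3 := by
    rw [Finset.card_insert_of_notMem, Finset.card_pair h3]
    simp only [Finset.mem_insert, Finset.mem_singleton]
    rintro (rfl | rfl)
    exacts [h1 rfl, h2 rfl]
  have := Finset.card_le_card hsub
  omega

lemma Bne (A B : Fin 6 → Finset α)
    (hdisj : ∀ i, A i ∩ B i = ∅)
    (hone : ∀ i j, i ≠ j → (A i ∩ B j).card = 1) :
    ∀ j j' : Fin 6, j ≠ j' → B j ≠ B j' := by
  intro j j' hne heq
  have h := hone j j' hne
  rw [← heq, hdisj j] at h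
  simp at h

lemma threeB (A B : Fin 6 → Finset α)
    (hdisj : ∀ i, A i ∩ B i = ∅)
    (hone : ∀ i j, i ≠ j → (A i ∩ B j).card = 1)
    (hA : ∀ i, (A i).card ≤ 2) (hB : ∀ i, (B i).card ≤ 2)
    {x : α} {j1 j2 j3 k : Fin 6}
    (h12 : j1 ≠ j2) (h13 : j1 ≠ j3) (h23 : j2 ≠ j3)
    (hx1 : x ∈ B j1) (hx2 : x ∈ B j2) (hx3 : x ∈ B j3)
    (hk : x ∉ B k) : x ∈ A k := by
  by_contra hxk
  have hkj : ∀ j : Fin 6, x ∈ B j → k ≠ j := fun j hj he => hk (he ▸ hj)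
  have getw : ∀ j : Fin 6, x ∈ B j → ∃ w, w ∈ A k ∧ w ∈ B j ∧ w ≠ x := by
    intro j hj
    have h := hone k j (hkj j hj)
    have hne : (A k ∩ B j).Nonempty := Finset.card_pos.mp (by rw [h]; norm_num)
    obtain ⟨w, hw⟩ := hne
    exact ⟨w, (Finset.mem_inter.mp hw).1, (Finset.mem_inter.mp hw).2,
      fun he => hxk (he ▸ (Finset.mem_inter.mp hw).1)⟩
  obtain ⟨w1, hw1A, hw1B, hw1x⟩ := getw j1 hx1
  obtain ⟨w2, hw2A, hw2B, hw2x⟩ := getw j2 hx2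
  obtain ⟨w3, hw3A, hw3B, hw3x⟩ := getw j3 hx3
  have pair : ∀ (p q : Fin 6) (wp wq : α), p ≠ q → x ∈ B p → x ∈ B q →
      wp ∈ B p → wq ∈ B q → wp ≠ x → wq ≠ x → wp = wq → False := by
    intro p q wp wq hpq hxp hxq hwp hwq hwpx hwqx hww
    apply Bne A B hdisj hone p q hpq
    rw [two_mem_eq (hB p) hxp hwp (Ne.symm hwpx), two_mem_eq (hB q) hxq hwq (Ne.symm hwqx), hww]
  rcases three_in_two (hA k) hw1A hw2A hw3A with h | h | h
  · exact pair j1 j2 w1 w2 h12 hx1 hx2 hw1B hw2B hw1x hw2x h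
  · exact pair j1 j3 w1 w3 h13 hx1 hx3 hw1B hw3B hw1x hw3x h
  · exact pair j2 j3 w2 w3 h23 hx2 hx3 hw2B hw3B hw2x hw3x h

lemma tripleA (A B : Fin 6 → Finset α)
    (hdisj : ∀ i, A i ∩ B i = ∅)
    (hone : ∀ i j, i ≠ j → (A i ∩ B j).card = 1)
    (hA : ∀ i, (A i).card ≤ 2) (hB : ∀ i, (B i).card ≤ 2)
    {x y : α} {i1 i2 i3 : Fin 6}
    (h12 : i1 ≠ i2) (h13 : i1 ≠ i3) (h23 : i2 ≠ i3)
    (hxA1 : x ∈ A i1) (hxA2 : x ∈ A i2) (hxA3 : x ∈ A i3)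
    (hyB1 : y ∈ B i1) (hyB2 : y ∈ B i2) (hyB3 : y ∈ B i3) : False := by
  have notB : ∀ (i : Fin 6) (z : α), z ∈ A i → z ∉ B i := by
    intro i z hz hz'
    have hmem : z ∈ A i ∩ B i := Finset.mem_inter.mpr ⟨hz, hz'⟩
    rw [hdisj i] at hmem
    exact absurd hmem (Finset.notMem_empty z)
  have getw : ∀ p q : Fin 6, p ≠ q → x ∈ A q → y ∈ B p →
      ∃ w, w ∈ A p ∧ w ∈ B q ∧ w ≠ x ∧ w ≠ y := by
    intro p q hpq hxq hyp
    have h := hone p q hpq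
    have hne : (A p ∩ B q).Nonempty := Finset.card_pos.mp (by rw [h]; norm_num)
    obtain ⟨w, hw⟩ := hne
    refine ⟨w, (Finset.mem_inter.mp hw).1, (Finset.mem_inter.mp hw).2, ?_, ?_⟩
    · intro he; subst he; exact notB q w hxq (Finset.mem_inter.mp hw).2
    · intro he; subst he; exact notB p _ (Finset.mem_inter.mp hw).1 hyp
  obtain ⟨w12, h12A, h12B, h12x, h12y⟩ := getw i1 i2 h12 hxA2 hyB1
  obtain ⟨w13, h13A, h13B, h13x, h13y⟩ := getw i1 i3 h13 hxA3 hyB1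
  obtain ⟨w23, h23A, h23B, h23x, h23y⟩ := getw i2 i3 h23 hxA3 hyB2
  obtain ⟨w21, h21A, h21B, h21x, h21y⟩ := getw i2 i1 (Ne.symm h12) hxA1 hyB2
  have e1 : w12 = w13 := mem_pair_eq (hA i1) hxA1 h12A h13A h12x h13x
  have e2 : w13 = w23 := mem_pair_eq (hB i3) hyB3 h13B h23B h13y h23y
  have e3 : w23 = w21 := mem_pair_eq (hA i2) hxA2 h23A h21A h23x h21x
  exact notB i1 w12 h12A (by rw [e1, e2, e3]; exact h21B)

lemma key (A B : Fin 6 → Finset α)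
    (hdisj : ∀ i, A i ∩ B i = ∅)
    (hone : ∀ i j, i ≠ j → (A i ∩ B j).card = 1)
    (hA : ∀ i, (A i).card ≤ 2) (hB : ∀ i, (B i).card ≤ 2) : False := by
  classical
  have notB : ∀ (i : Fin 6) (z : α), z ∈ A i → z ∉ B i := by
    intro i z hz hz'
    have hmem : z ∈ A i ∩ B i := Finset.mem_inter.mpr ⟨hz, hz'⟩
    rw [hdisj i] at hmem
    exact absurd hmem (Finset.notMem_empty z)
  -- pigeonhole: each A i has an element in at least 3 of the B j's
  have exa : ∀ i : Fin 6, ∃ x j1 j2 j3, x ∈ A i ∧ j1 ≠ j2 ∧ j1 ≠ j3 ∧ j2 ≠ j3 ∧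
      x ∈ B j1 ∧ x ∈ B j2 ∧ x ∈ B j3 := by
    intro i
    obtain ⟨j0, hj0⟩ := exists_ne i
    have hA0 : (A i).Nonempty := by
      have h := hone i j0 (Ne.symm hj0)
      have hne : (A i ∩ B j0).Nonempty := Finset.card_pos.mp (by rw [h]; norm_num)
      obtain ⟨w, hw⟩ := hne
      exact ⟨w, (Finset.mem_inter.mp hw).1⟩
    obtain ⟨a0, ha0⟩ := hA0
    set f : Fin 6 → α := fun j => if h : (A i ∩ B j).Nonempty then h.choose else a0 with hf
    have hmaps : ∀ j ∈ Finset.univ.erase i, f j ∈ A i ∧ f j ∈ B j := by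
      intro j hj
      have hji : j ≠ i := (Finset.mem_erase.mp hj).1
      have h1 := hone i j (Ne.symm hji)
      have hne : (A i ∩ B j).Nonempty := Finset.card_pos.mp (by rw [h1]; norm_num)
      have hfj : f j = hne.choose := by simp only [hf, dif_pos hne]
      have hm := hne.choose_spec
      rw [hfj]
      exact ⟨(Finset.mem_inter.mp hm).1, (Finset.mem_inter.mp hm).2⟩
    have hcard : (A i).card * 2 < (Finset.univ.erase i).card := by
      have h5 : (Finset.univ.erase i).card = 5 := by
        rw [Finset.card_erase_of_mem (Finset.mem_univ i), Finset.card_univ]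
        simp
      rw [h5]
      have := hA i
      omega
    obtain ⟨x, hxA, hx⟩ := Finset.exists_lt_card_fiber_of_mul_lt_card_of_maps_to
      (fun j hj => (hmaps j hj).1) hcard
    obtain ⟨p1, p2, p3, hp1, hp2, hp3, g12, g13, g23⟩ := Finset.two_lt_card_iff.mp hx
    have hB' : ∀ j, j ∈ (Finset.univ.erase i).filter (fun j => f j = x) → x ∈ B j := by
      intro j hj
      have hm := Finset.mem_filter.mp hj
      have hb := (hmaps j hm.1).2
      rw [hm.2] at hb
      exact hb
    exact ⟨x, p1, p2, p3, hxA, g12, g13, g23, hB' _ hp1, hB' _ hp2, hB' _ hp3⟩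
  choose a j1 j2 j3 haA h12 h13 h23 hb1 hb2 hb3 using exa
  have hcomp : ∀ i k : Fin 6, a i ∈ A k ∨ a i ∈ B k := by
    intro i k
    by_cases h : a i ∈ B k
    · exact Or.inr h
    · exact Or.inl (threeB A B hdisj hone hA hB (h12 i) (h13 i) (h23 i)
        (hb1 i) (hb2 i) (hb3 i) h)
  set SA : α → Finset (Fin 6) := fun x => Finset.univ.filter (fun k => x ∈ A k) with hSA
  set SB : α → Finset (Fin 6) := fun x => Finset.univ.filter (fun k => x ∈ B k) with hSB
  have hmemSA : ∀ (x : α) (k : Fin 6), k ∈ SA x ↔ x ∈ A k := by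
    intro x k; simp [hSA]
  have hmemSB : ∀ (x : α) (k : Fin 6), k ∈ SB x ↔ x ∈ B k := by
    intro x k; simp [hSB]
  have hdisjS : ∀ x, Disjoint (SA x) (SB x) := by
    intro x
    rw [Finset.disjoint_left]
    intro k hk hk'
    exact notB k x ((hmemSA x k).mp hk) ((hmemSB x k).mp hk')
  have hSBcard : ∀ i, 3 ≤ (SB (a i)).card := by
    intro i
    have hsub : ({j1 i, j2 i, j3 i} : Finset (Fin 6)) ⊆ SB (a i) := by
      intro z hz
      simp only [Finset.mem_insert, Finset.mem_singleton] at hz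
      rcases hz with rfl | rfl | rfl
      · exact (hmemSB _ _).mpr (hb1 i)
      · exact (hmemSB _ _).mpr (hb2 i)
      · exact (hmemSB _ _).mpr (hb3 i)
    have h3 : ({j1 i, j2 i, j3 i} : Finset (Fin 6)).card = 3 := by
      rw [Finset.card_insert_of_notMem, Finset.card_pair (h23 i)]
      simp only [Finset.mem_insert, Finset.mem_singleton]
      rintro (h | h)
      exacts [h12 i h, h13 i h]
    have := Finset.card_le_card hsub
    omega
  have hsum : ∀ x : α, (SA x).card + (SB x).card ≤ 6 := by
    intro x
    rw [← Finset.card_union_of_disjoint (hdisjS x)]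
    have h1 : (SA x ∪ SB x).card ≤ (Finset.univ : Finset (Fin 6)).card :=
      Finset.card_le_card (Finset.subset_univ _)
    simpa using h1
  have hx_ne : ∃ i i' : Fin 6, a i ≠ a i' := by
    by_contra h
    push_neg at h
    have hsub : (Finset.univ : Finset (Fin 6)) ⊆ SA (a 0) := by
      intro k _
      refine (hmemSA _ _).mpr ?_
      rw [h 0 k]
      exact haA k
    have h1 := Finset.card_le_card hsub
    have h6 : (Finset.univ : Finset (Fin 6)).card = 6 := by simp
    have h2 := hsum (a 0)
    have h3 := hSBcard 0
    omega
  obtain ⟨ii, ii', hne⟩ := hx_ne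
  set x := a ii with hxdef
  set y := a ii' with hydef
  have hcx : ∀ k, x ∈ A k ∨ x ∈ B k := hcomp ii
  have hcy : ∀ k, y ∈ A k ∨ y ∈ B k := hcomp ii'
  have hSBx : 3 ≤ (SB x).card := hSBcard ii
  have hSBy : 3 ≤ (SB y).card := hSBcard ii'
  have hSAx : (SA x).card ≤ 3 := by have := hsum x; omega
  have hSAy : (SA y).card ≤ 3 := by have := hsum y; omega
  have hcomplx : ∀ k, k ∉ SA x → x ∈ B k := by
    intro k hk
    rcases hcx k with h | h
    · exact absurd ((hmemSA x k).mpr h) hk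
    · exact h
  have hcomply : ∀ k, k ∉ SA y → y ∈ B k := by
    intro k hk
    rcases hcy k with h | h
    · exact absurd ((hmemSA y k).mpr h) hk
    · exact h
  by_cases hc : ∃ p, x ∈ A p ∧ y ∈ A p
  · obtain ⟨p, hpx, hpy⟩ := hc
    have hunion : (SA x ∪ SA y).card ≤ 5 := by
      have h1 := Finset.card_union_add_card_inter (SA x) (SA y)
      have h2 : 0 < (SA x ∩ SA y).card := Finset.card_pos.mpr
        ⟨p, Finset.mem_inter.mpr ⟨(hmemSA x p).mpr hpx, (hmemSA y p).mpr hpy⟩⟩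
      omega
    have hex : (Finset.univ \ (SA x ∪ SA y)).Nonempty := by
      rw [← Finset.card_pos, Finset.card_sdiff_of_subset (Finset.subset_univ _)]
      have h6 : (Finset.univ : Finset (Fin 6)).card = 6 := by simp
      omega
    obtain ⟨j, hj⟩ := hex
    have hjm := Finset.mem_sdiff.mp hj
    have hjx : x ∈ B j := hcomplx j (fun h => hjm.2 (Finset.mem_union_left _ h))
    have hjy : y ∈ B j := hcomply j (fun h => hjm.2 (Finset.mem_union_right _ h))
    have hpj : p ≠ j := by
      rintro rfl
      exact notB p x hpx hjx
    have h1 := hone p j hpj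
    rw [two_mem_eq (hA p) hpx hpy hne, two_mem_eq (hB j) hjx hjy hne,
      Finset.inter_self, Finset.card_pair hne] at h1
    omega
  · push_neg at hc
    have hdisjxy : Disjoint (SA x) (SA y) := by
      rw [Finset.disjoint_left]
      intro k hk hk'
      exact hc k ((hmemSA x k).mp hk) ((hmemSA y k).mp hk')
    have hO : (Finset.univ \ (SA x ∪ SA y)).card ≤ 1 := by
      by_contra h
      push_neg at h
      obtain ⟨u, v, hu, hv, huv⟩ := Finset.one_lt_card_iff.mp h
      have hum := Finset.mem_sdiff.mp hu
      have hvm := Finset.mem_sdiff.mp hv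
      have hBu : B u = {x, y} := two_mem_eq (hB u)
        (hcomplx u (fun h' => hum.2 (Finset.mem_union_left _ h')))
        (hcomply u (fun h' => hum.2 (Finset.mem_union_right _ h'))) hne
      have hBv : B v = {x, y} := two_mem_eq (hB v)
        (hcomplx v (fun h' => hvm.2 (Finset.mem_union_left _ h')))
        (hcomply v (fun h' => hvm.2 (Finset.mem_union_right _ h'))) hne
      exact Bne A B hdisj hone u v huv (hBu.trans hBv.symm)
    have hcardU : 5 ≤ (SA x ∪ SA y).card := by
      have h1 := Finset.card_sdiff_of_subset (Finset.subset_univ (SA x ∪ SA y))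
      have h6 : (Finset.univ : Finset (Fin 6)).card = 6 := by simp
      have h2 : (SA x ∪ SA y).card ≤ 6 := by
        have := Finset.card_le_card (Finset.subset_univ (SA x ∪ SA y))
        omega
      omega
    have hU := Finset.card_union_of_disjoint hdisjxy
    have hsplit : 3 ≤ (SA x).card ∨ 3 ≤ (SA y).card := by omega
    rcases hsplit with h | h
    · obtain ⟨p1, p2, p3, hp1, hp2, hp3, g12, g13, g23⟩ :=
        Finset.two_lt_card_iff.mp (by omega : 2 < (SA x).card)
      have m' : ∀ p, p ∈ SA x → x ∈ A p ∧ y ∈ B p := by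
        intro p hp
        have hxp := (hmemSA x p).mp hp
        exact ⟨hxp, hcomply p (fun h' => hc p hxp ((hmemSA y p).mp h'))⟩
      obtain ⟨a1, b1⟩ := m' p1 hp1
      obtain ⟨a2, b2⟩ := m' p2 hp2
      obtain ⟨a3, b3⟩ := m' p3 hp3
      exact tripleA A B hdisj hone hA hB g12 g13 g23 a1 a2 a3 b1 b2 b3
    · obtain ⟨p1, p2, p3, hp1, hp2, hp3, g12, g13, g23⟩ :=
        Finset.two_lt_card_iff.mp (by omega : 2 < (SA y).card)
      have m' : ∀ p, p ∈ SA y → y ∈ A p ∧ x ∈ B p := by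
        intro p hp
        have hyp := (hmemSA y p).mp hp
        exact ⟨hyp, hcomplx p (fun h' => hc p ((hmemSA x p).mp h') hyp)⟩
      obtain ⟨a1, b1⟩ := m' p1 hp1
      obtain ⟨a2, b2⟩ := m' p2 hp2
      obtain ⟨a3, b3⟩ := m' p3 hp3
      exact tripleA A B hdisj hone hA hB g12 g13 g23 a1 a2 a3 b1 b2 b3

end Aux

theorem stmt_8 {α : Type*} [DecidableEq α] (m : ℕ) (A B : Fin m → Finset α)
    (hdisj : ∀ i, A i ∩ B i = ∅)
    (hone : ∀ i j, i ≠ j → (A i ∩ B j).card = 1)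
    (hA : ∀ i, (A i).card ≤ 2) (hB : ∀ i, (B i).card ≤ 2) :
    m ≤ 5 := by
  by_contra hm
  push_neg at hm
  have h6 : 6 ≤ m := hm
  exact key (fun i => A (Fin.castLE h6 i)) (fun i => B (Fin.castLE h6 i))
    (fun i => hdisj _)
    (fun i j hij => hone _ _ (fun h => hij (Fin.castLE_injective h6 h)))
    (fun i => hA _) (fun i => hB _)
end

section
/- For every even n ≥ 2 there exists a 1-cross intersecting set pair system {(A_i, B_i)}_{i=1}^m with |A_i| ≤ n and |B_i| ≤ n for all i and m ≥ 5^{n/2}. -/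
/-!
Two 1-cross intersecting systems `(X, X')` on `α` indexed by `ι` and `(Y, Y')` on `β` indexed
by `κ` combine lexicographically into one indexed by `ι × κ`: the pair `(i, k)` gets `X i`
together with a copy of `Y k` tagged by `i`. For `i ≠ j` the tagged copies are disjoint and the
first coordinate contributes the single common element; for `i = j` the first coordinate
contributes nothing and the tagged copies meet in exactly one element. Set sizes add up, so
iterating this `n / 2` times with the pentagon system `{i, i + 1}, {i + 2, i + 4}` on `Fin 5`
gives `5 ^ (n / 2)` pairs of sets of size at most `n`.
-/

open Finset Function

variable {ι κ α β : Type*}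

structure IsOneCrossIntersecting [DecidableEq α] (A B : ι → Finset α) : Prop where
  disjoint : ∀ i, Disjoint (A i) (B i)
  card_inter : ∀ i j, i ≠ j → #(A i ∩ B j) = 1

namespace IsOneCrossIntersecting

variable [DecidableEq α] [DecidableEq β] {A B : ι → Finset α}

theorem comp (h : IsOneCrossIntersecting A B) {e : κ → ι} (he : Injective e) :
    IsOneCrossIntersecting (A ∘ e) (B ∘ e) where
  disjoint k := h.disjoint (e k)
  card_inter k l hkl := h.card_inter (e k) (e l) (he.ne hkl)

theorem map (h : IsOneCrossIntersecting A B) (f : α ↪ β) :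
    IsOneCrossIntersecting (fun i ↦ (A i).map f) (fun i ↦ (B i).map f) where
  disjoint i := (disjoint_map f).2 (h.disjoint i)
  card_inter i j hij := by rw [← map_inter, card_map, h.card_inter i j hij]

end IsOneCrossIntersecting

theorem Finset.disjSum_inter_disjSum [DecidableEq α] [DecidableEq β] (s s' : Finset α)
    (t t' : Finset β) : s.disjSum t ∩ s'.disjSum t' = (s ∩ s').disjSum (t ∩ t') := by
  ext (a | b) <;> simp

section LexProd

def lexProd (X : ι → Finset α) (Y : κ → Finset β) (p : ι × κ) : Finset (α ⊕ ι × β) :=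
  (X p.1).disjSum ((Y p.2).map (Embedding.sectR p.1 β))

theorem card_lexProd (X : ι → Finset α) (Y : κ → Finset β) (p : ι × κ) :
    #(lexProd X Y p) = #(X p.1) + #(Y p.2) := by
  rw [lexProd, card_disjSum, card_map]

variable [DecidableEq ι] [DecidableEq α] [DecidableEq β]

theorem card_lexProd_inter (X X' : ι → Finset α) (Y Y' : κ → Finset β) (p q : ι × κ) :
    #(lexProd X Y p ∩ lexProd X' Y' q) =
      #(X p.1 ∩ X' q.1) + if p.1 = q.1 then #(Y p.2 ∩ Y' q.2) else 0 := by
  rw [lexProd, lexProd, disjSum_inter_disjSum, card_disjSum]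
  split_ifs with h
  · rw [h, ← map_inter, card_map]
  · congr 1
    rw [card_eq_zero, ← disjoint_iff_inter_eq_empty, disjoint_left]
    simp only [mem_map, Embedding.sectR_apply, not_exists, not_and]
    rintro _ ⟨b, -, rfl⟩ b' -
    exact fun hq ↦ h (congrArg Prod.fst hq).symm

theorem IsOneCrossIntersecting.lexProd {X X' : ι → Finset α} {Y Y' : κ → Finset β}
    (hX : IsOneCrossIntersecting X X') (hY : IsOneCrossIntersecting Y Y') :
    IsOneCrossIntersecting (lexProd X Y) (lexProd X' Y') where
  disjoint p := by
    rw [disjoint_iff_inter_eq_empty, ← card_eq_zero, card_lexProd_inter, if_pos rfl,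
      disjoint_iff_inter_eq_empty.1 (hX.disjoint _), disjoint_iff_inter_eq_empty.1 (hY.disjoint _)]
    rfl
  card_inter p q hpq := by
    rw [card_lexProd_inter]
    by_cases h : p.1 = q.1
    · have h2 : p.2 ≠ q.2 := fun h2 ↦ hpq (Prod.ext h h2)
      rw [if_pos h, h, disjoint_iff_inter_eq_empty.1 (hX.disjoint _), card_empty,
        hY.card_inter _ _ h2]
    · rw [if_neg h, hX.card_inter _ _ h]

end LexProd

def pentagonA (i : Fin 5) : Finset (Fin 5) := {i, i + 1}

def pentagonB (i : Fin 5) : Finset (Fin 5) := {i + 2, i + 4}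

theorem isOneCrossIntersecting_pentagon : IsOneCrossIntersecting pentagonA pentagonB :=
  ⟨by decide, by decide⟩

theorem card_pentagonA_le (i : Fin 5) : #(pentagonA i) ≤ 2 := card_le_two

theorem card_pentagonB_le (i : Fin 5) : #(pentagonB i) ≤ 2 := card_le_two

theorem exists_isOneCrossIntersecting_fin_five_pow (k : ℕ) :
    ∃ A B : Fin (5 ^ k) → Finset ℕ, IsOneCrossIntersecting A B ∧
      (∀ i, #(A i) ≤ 2 * k) ∧ ∀ i, #(B i) ≤ 2 * k := by
  induction k with
  | zero => exact ⟨fun _ ↦ ∅, fun _ ↦ ∅, ⟨fun _ ↦ disjoint_empty_left _,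
      fun i j hij ↦ absurd (Subsingleton.elim (α := Fin 1) i j) hij⟩, fun _ ↦ le_rfl, fun _ ↦ le_rfl⟩
  | succ k ih =>
    obtain ⟨A, B, hAB, hA, hB⟩ := ih
    let f := Encodable.encode' (Fin 5 ⊕ Fin 5 × ℕ)
    let e : Fin (5 ^ (k + 1)) ≃ Fin 5 × Fin (5 ^ k) :=
      (finCongr (pow_succ' 5 k)).trans finProdFinEquiv.symm
    refine ⟨fun i ↦ (lexProd pentagonA A (e i)).map f, fun i ↦ (lexProd pentagonB B (e i)).map f,
      ((isOneCrossIntersecting_pentagon.lexProd hAB).comp e.injective).map f,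
      fun i ↦ ?_, fun i ↦ ?_⟩
    · rw [card_map, card_lexProd]
      linarith [card_pentagonA_le (e i).1, hA (e i).2]
    · rw [card_map, card_lexProd]
      linarith [card_pentagonB_le (e i).1, hB (e i).2]

theorem stmt_10_general (n : ℕ) :
    ∃ (m : ℕ) (A B : Fin m → Finset ℕ),
      (∀ i, A i ∩ B i = ∅) ∧
      (∀ i j, i ≠ j → ((A i ∩ B j).card = 1)) ∧
      (∀ i, (A i).card ≤ n) ∧ (∀ i, (B i).card ≤ n) ∧
      5 ^ (n / 2) ≤ m := by
  obtain ⟨A, B, hAB, hA, hB⟩ := exists_isOneCrossIntersecting_fin_five_pow (n / 2)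
  have hn : 2 * (n / 2) ≤ n := Nat.mul_div_le n 2
  exact ⟨_, A, B, fun i ↦ disjoint_iff_inter_eq_empty.1 (hAB.disjoint i), hAB.card_inter,
    fun i ↦ (hA i).trans hn, fun i ↦ (hB i).trans hn, le_rfl⟩

theorem stmt_10 (n : ℕ) (hn : 2 ≤ n) (heven : Even n) :
    ∃ (m : ℕ) (A B : Fin m → Finset ℕ),
      (∀ i, A i ∩ B i = ∅) ∧
      (∀ i j, i ≠ j → ((A i ∩ B j).card = 1)) ∧
      (∀ i, (A i).card ≤ n) ∧ (∀ i, (B i).card ≤ n) ∧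
      5 ^ (n / 2) ≤ m :=
  stmt_10_general n
end

section
/- Let S = {(A_i, B_i)}_{i ∈ I} be a finite set pair system with A_i ≠ ∅, B_i ≠ ∅, and A_i ∩ B_i = ∅ for every i ∈ I, and let Σ(S) = ∑_{i ∈ I} 1 / C(|A_i| + |B_i|, |A_i|). Then Σ(S) equals the average over v in the ground set V(S) of Σ(S[I_v^A] − {v}), where I_v^A = {i ∈ I : v ∉ A_i} and S[J] − {v} denotes the system {(A_i \ {v}, B_i \ {v})}_{i ∈ J}. In particular Σ(S) ≤ max over v ∈ V(S) of Σ(S[I_v^A] − {v}). -/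
private lemma key_nat' (a c : ℕ) :
    (c+1) * ((a+(c+1)).choose a) = (a+c+1) * ((a+c).choose a) := by
  have h1 : (a+c).choose a = (a+c).choose c := Nat.choose_symm_add
  have h2 : (a+(c+1)).choose a = (a+(c+1)).choose (c+1) := Nat.choose_symm_add
  have h3 : (a+c+1) * ((a+c).choose c) = ((a+(c+1)).choose (c+1)) * (c+1) := by
    simpa [Nat.succ_eq_add_one, add_assoc] using Nat.add_one_mul_choose_eq (a+c) c
  rw [h1, h2, Nat.mul_comm]; exact h3.symm

/-- Holzman's averaging lemma (Lemma from the paper). `V` is the ground set. -/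
theorem stmt_11 {α : Type*} [DecidableEq α] {ι : Type*} (I : Finset ι)
    (A B : ι → Finset α)
    (hA : ∀ i ∈ I, (A i).Nonempty) (hB : ∀ i ∈ I, (B i).Nonempty)
    (hdisj : ∀ i ∈ I, A i ∩ B i = ∅) :
    (∑ i ∈ I, (1 : ℚ) / (((A i).card + (B i).card).choose (A i).card)) =
      (1 / (I.biUnion (fun i => A i ∪ B i)).card) *
        ∑ v ∈ I.biUnion (fun i => A i ∪ B i),
          ∑ i ∈ I.filter (fun i => v ∉ A i),
            (1 : ℚ) / ((((A i).erase v).card + ((B i).erase v).card).choose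
              ((A i).erase v).card) ∧
    (I.Nonempty →
      ∃ v ∈ I.biUnion (fun i => A i ∪ B i),
        (∑ i ∈ I, (1 : ℚ) / (((A i).card + (B i).card).choose (A i).card)) ≤
          ∑ i ∈ I.filter (fun i => v ∉ A i),
            (1 : ℚ) / ((((A i).erase v).card + ((B i).erase v).card).choose
              ((A i).erase v).card)) := by
  classical
  set V := I.biUnion (fun i => A i ∪ B i) with hVdef
  have hsub : ∀ i ∈ I, A i ∪ B i ⊆ V := fun i hi => Finset.subset_biUnion_of_mem (fun i => A i ∪ B i) hi
  have key : ∀ i ∈ I,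
      (∑ v ∈ V.filter (fun v => v ∉ A i),
        (1:ℚ) / ((((A i).erase v).card + ((B i).erase v).card).choose
          ((A i).erase v).card))
      = (V.card : ℚ) * (1/(((A i).card + (B i).card).choose (A i).card)) := by
    intro i hi
    obtain ⟨c, hc⟩ : ∃ c, (B i).card = c + 1 :=
      ⟨(B i).card - 1, by have := (hB i hi).card_pos; omega⟩
    have hBA : ∀ v ∈ B i, v ∉ A i := by
      intro v hv hvA
      have hm : v ∈ A i ∩ B i := Finset.mem_inter.mpr ⟨hvA, hv⟩
      simp [hdisj i hi] at hm
    have hsplit : V.filter (fun v => v ∉ A i) = B i ∪ (V \ (A i ∪ B i)) := by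
      ext v
      simp only [Finset.mem_filter, Finset.mem_union, Finset.mem_sdiff]
      constructor
      · rintro ⟨hv, hvA⟩
        by_cases hvB : v ∈ B i
        · exact Or.inl hvB
        · exact Or.inr ⟨hv, by tauto⟩
      · rintro (h | ⟨hv, hn⟩)
        · exact ⟨hsub i hi (Finset.mem_union_right _ h), hBA v h⟩
        · exact ⟨hv, fun hA' => hn (Or.inl hA')⟩
    have hdU : Disjoint (B i) (V \ (A i ∪ B i)) := by
      rw [Finset.disjoint_left]
      intro v hv hv'
      exact (Finset.mem_sdiff.mp hv').2 (Finset.mem_union_right _ hv)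
    rw [hsplit, Finset.sum_union hdU]
    have e1 : ∀ v ∈ B i,
        (1:ℚ) / ((((A i).erase v).card + ((B i).erase v).card).choose
          ((A i).erase v).card)
        = 1 / (((A i).card + c).choose (A i).card) := by
      intro v hv
      rw [Finset.erase_eq_of_notMem (hBA v hv), Finset.card_erase_of_mem hv, hc]
      norm_num
    have e2 : ∀ v ∈ V \ (A i ∪ B i),
        (1:ℚ) / ((((A i).erase v).card + ((B i).erase v).card).choose
          ((A i).erase v).card)
        = 1 / (((A i).card + (B i).card).choose (A i).card) := by
      intro v hv
      obtain ⟨_, hn⟩ := Finset.mem_sdiff.mp hv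
      rw [Finset.erase_eq_of_notMem (fun h => hn (Finset.mem_union_left _ h)),
        Finset.erase_eq_of_notMem (fun h => hn (Finset.mem_union_right _ h))]
    rw [Finset.sum_congr rfl e1, Finset.sum_congr rfl e2, Finset.sum_const,
      Finset.sum_const, nsmul_eq_mul, nsmul_eq_mul]
    have hcardU : (A i ∪ B i).card = (A i).card + (B i).card :=
      Finset.card_union_of_disjoint (Finset.disjoint_iff_inter_eq_empty.mpr (hdisj i hi))
    have hle : (A i).card + (B i).card ≤ V.card :=
      hcardU ▸ Finset.card_le_card (hsub i hi)
    rw [Finset.card_sdiff_of_subset (hsub i hi), hcardU, hc]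
    set a := (A i).card with ha
    set n := V.card with hn
    have hkeyQ : ((c:ℚ)+1) * (((a+(c+1)).choose a : ℕ) : ℚ)
        = ((a:ℚ)+c+1) * (((a+c).choose a : ℕ) : ℚ) := by
      exact_mod_cast key_nat' a c
    have hle' : a + (c+1) ≤ n := by omega
    have hcast : ((n - (a + (c+1)) : ℕ) : ℚ) = (n:ℚ) - (a + (c+1)) := by
      rw [Nat.cast_sub hle']; push_cast; ring
    have hpos1 : (((a+c).choose a : ℕ) : ℚ) ≠ 0 := by
      exact_mod_cast (Nat.choose_pos (Nat.le_add_right a c)).ne'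
    have hpos2 : (((a+(c+1)).choose a : ℕ) : ℚ) ≠ 0 := by
      exact_mod_cast (Nat.choose_pos (Nat.le_add_right a (c+1))).ne'
    rw [hcast]
    simp only [mul_one_div]
    rw [div_add_div _ _ hpos1 hpos2, div_eq_div_iff (mul_ne_zero hpos1 hpos2) hpos2]
    push_cast
    linear_combination (((a+(c+1)).choose a : ℕ) : ℚ) * hkeyQ
  have swap : ∑ v ∈ V, ∑ i ∈ I.filter (fun i => v ∉ A i),
        (1:ℚ) / ((((A i).erase v).card + ((B i).erase v).card).choose
          ((A i).erase v).card)
      = ∑ i ∈ I, ∑ v ∈ V.filter (fun v => v ∉ A i),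
        (1:ℚ) / ((((A i).erase v).card + ((B i).erase v).card).choose
          ((A i).erase v).card) := by
    simp_rw [Finset.sum_filter]
    exact Finset.sum_comm
  have total : ∑ v ∈ V, ∑ i ∈ I.filter (fun i => v ∉ A i),
        (1:ℚ) / ((((A i).erase v).card + ((B i).erase v).card).choose
          ((A i).erase v).card)
      = (V.card : ℚ) * ∑ i ∈ I, (1:ℚ) / (((A i).card + (B i).card).choose (A i).card) := by
    rw [swap, Finset.sum_congr rfl key, ← Finset.mul_sum]
  constructor
  · rcases Nat.eq_zero_or_pos V.card with hV0 | hV0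
    · have hIe : I = ∅ := by
        by_contra h
        obtain ⟨i, hi⟩ := Finset.nonempty_iff_ne_empty.mpr h
        obtain ⟨x, hx⟩ := hA i hi
        have hxV : x ∈ V := hsub i hi (Finset.mem_union_left _ hx)
        have : V = ∅ := Finset.card_eq_zero.mp hV0
        rw [this] at hxV
        exact absurd hxV (Finset.notMem_empty x)
      have hVe : V = ∅ := by rw [hVdef, hIe]; simp
      rw [hIe, hVe]
      simp
    · rw [total]
      have : (V.card : ℚ) ≠ 0 := by
        exact_mod_cast hV0.ne'
      field_simp
  · intro hIne
    obtain ⟨i, hi⟩ := hIne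
    obtain ⟨x, hx⟩ := hA i hi
    have hVne : V.Nonempty := ⟨x, hsub i hi (Finset.mem_union_left _ hx)⟩
    have hsum : ∑ _v ∈ V, (∑ i ∈ I, (1:ℚ) / (((A i).card + (B i).card).choose (A i).card))
        ≤ ∑ v ∈ V, ∑ i ∈ I.filter (fun i => v ∉ A i),
          (1:ℚ) / ((((A i).erase v).card + ((B i).erase v).card).choose
            ((A i).erase v).card) := by
      rw [total, Finset.sum_const, nsmul_eq_mul]
    exact Finset.exists_le_of_sum_le hVne hsum
end

section
/- Let S = {(A_i, B_i)}_{i ∈ I} be a 1-cross intersecting set pair system, and suppose there exist i ≠ j in I with |A_i| = |A_j| = 2, A_i ∩ A_j ≠ ∅, |B_i| = |B_j| = 2, and B_i ∩ B_j ≠ ∅. Then ∑_{k ∈ I} 1 / C(|A_k| + |B_k|, |A_k|) ≤ 5/6. -/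
/-!
Write `A i = {a, x}` and `A j = {a, y}`; the 1-cross condition forces `B i = {y, b}` and
`B j = {x, b}`, so `i` and `j` contribute `1 / C(4, 2) = 1 / 6` each. Every other pair `(A k, B k)`
meets each of these four sets in exactly one point, so, after possibly exchanging the roles of `A`
and `B`, `b ∈ A k` and `x, y ∉ A k`, while either `a ∈ B k` (first kind) or `x, y ∈ B k` (second
kind).

The remaining weight is bounded by Bollobás' inequality `∑ 1 / C(|C k| + |D k|, |C k|) ≤ 1` for
families with `C k ∩ D k = ∅` and `C k ∩ D l ≠ ∅` (`k ≠ l`), applied to the pairs of the first kind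
with `b` and `a` deleted, and to all pairs with `b, x, y` deleted from those of the second kind.
Deleting one point from each side divides the weight by at least 2, deleting one point from `A k`
and two from `B k` by at least 3; once both kinds occur no `A k \ {b}` is empty and these factors
improve to 3 and 4. Either way the remaining weight is at most `1 / 2`.
-/

open Finset

section

variable {α ι : Type*} [DecidableEq α]

def invChoose (s t : ℕ) : ℚ := 1 / (s + t).choose s

lemma invChoose_pos (s t : ℕ) : 0 < invChoose s t := by
  have := Nat.choose_pos (Nat.le_add_right s t)
  unfold invChoose; positivity

lemma invChoose_comm (s t : ℕ) : invChoose s t = invChoose t s := by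
  rw [invChoose, invChoose, add_comm, Nat.choose_symm_add]

@[simp] lemma invChoose_zero_left (t : ℕ) : invChoose 0 t = 1 := by simp [invChoose]

lemma add_one_mul_invChoose (s t : ℕ) :
    (s + 1 : ℚ) * invChoose s t = (s + 1 + t) * invChoose (s + 1) t := by
  have h := Nat.add_one_mul_choose_eq (s + t) s
  rw [show s + t + 1 = s + 1 + t by omega] at h
  have h0 : ((s + t).choose s : ℚ) ≠ 0 := by exact_mod_cast (Nat.choose_pos (by omega)).ne'
  have h1 : ((s + 1 + t).choose (s + 1) : ℚ) ≠ 0 := by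
    exact_mod_cast (Nat.choose_pos (by omega)).ne'
  unfold invChoose
  rw [mul_one_div, mul_one_div, div_eq_div_iff h0 h1]
  exact_mod_cast by linarith

lemma mul_invChoose_add_one_add_one (s t : ℕ) :
    ((s + t + 1) * (s + t + 2) : ℚ) * invChoose (s + 1) (t + 1)
      = (s + 1) * (t + 1) * invChoose s t := by
  have h1 := add_one_mul_invChoose s (t + 1)
  have h2 := add_one_mul_invChoose t s
  rw [invChoose_comm t s, invChoose_comm (t + 1) s] at h2
  push_cast at h1 h2
  linear_combination -(s + t + 1 : ℚ) * h1 - (s + 1 : ℚ) * h2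

lemma mul_invChoose_add_one_add_two (s t : ℕ) :
    ((s + t + 1) * (s + t + 2) * (s + t + 3) : ℚ) * invChoose (s + 1) (t + 2)
      = (s + 1) * (t + 1) * (t + 2) * invChoose s t := by
  have h1 := mul_invChoose_add_one_add_one s t
  have h2 := add_one_mul_invChoose (t + 1) (s + 1)
  rw [invChoose_comm (t + 1) (s + 1), invChoose_comm (t + 1 + 1) (s + 1)] at h2
  push_cast at h1 h2
  linear_combination (t + 2 : ℚ) * h1 - ((s + t + 1) * (s + t + 2) : ℚ) * h2

lemma le_div_of_mul_eq_mul {𝕜 : Type*} [Field 𝕜] [LinearOrder 𝕜] [IsStrictOrderedRing 𝕜]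
    {u v p q c : 𝕜} (h : p * u = q * v) (hp : 0 < p) (hv : 0 ≤ v)
    (hc : 0 < c) (hq : c * q ≤ p) : u ≤ v / c := by
  rw [le_div_iff₀ hc]
  refine le_of_mul_le_mul_left ?_ hp
  nlinarith

lemma invChoose_add_one_add_one_le_half (s t : ℕ) :
    invChoose (s + 1) (t + 1) ≤ invChoose s t / 2 :=
  le_div_of_mul_eq_mul (mul_invChoose_add_one_add_one s t) (by positivity) (invChoose_pos s t).le
    two_pos (by nlinarith)

lemma invChoose_add_one_add_one_le_third {s : ℕ} (hs : 1 ≤ s) (t : ℕ) :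
    invChoose (s + 1) (t + 1) ≤ invChoose s t / 3 := by
  refine le_div_of_mul_eq_mul (mul_invChoose_add_one_add_one s t) (by positivity)
    (invChoose_pos s t).le three_pos ?_
  obtain ⟨s, rfl⟩ := Nat.exists_eq_add_of_le' hs
  rcases t with _ | t
  · push_cast; nlinarith
  · push_cast; nlinarith [sq_nonneg ((s : ℚ) - t)]

lemma invChoose_add_one_add_two_le_third (s t : ℕ) :
    invChoose (s + 1) (t + 2) ≤ invChoose s t / 3 := by
  refine le_div_of_mul_eq_mul (mul_invChoose_add_one_add_two s t) (by positivity)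
    (invChoose_pos s t).le three_pos ?_
  have : ((s + t + 1) * (s + t + 2) * (s + t + 3) : ℚ) - 3 * ((s + 1) * (t + 1) * (t + 2))
      = s ^ 3 + 3 * s ^ 2 * t + t ^ 3 + 6 * s ^ 2 + 3 * s * t + 3 * t ^ 2 + 5 * s + 2 * t := by
    ring
  linarith [show (0 : ℚ) ≤ s ^ 3 + 3 * s ^ 2 * t + t ^ 3 + 6 * s ^ 2 + 3 * s * t + 3 * t ^ 2
    + 5 * s + 2 * t by positivity]

lemma invChoose_add_one_add_two_le_quarter {s : ℕ} (hs : 1 ≤ s) (t : ℕ) :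
    invChoose (s + 1) (t + 2) ≤ invChoose s t / 4 := by
  refine le_div_of_mul_eq_mul (mul_invChoose_add_one_add_two s t) (by positivity)
    (invChoose_pos s t).le four_pos ?_
  obtain ⟨s, rfl⟩ := Nat.exists_eq_add_of_le' hs
  push_cast
  have : 4 * (((s + 1 + t + 1) * (s + 1 + t + 2) * (s + 1 + t + 3) : ℚ)
      - 4 * ((s + 1 + 1) * (t + 1) * (t + 2)))
      = 4 * (s ^ 3 + 9 * s ^ 2 + 18 * s + 8 + 6 * s * t + 2 * t + t ^ 2) + t * (2 * t - s) ^ 2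
        + 11 * s ^ 2 * t := by
    ring
  linarith [show (0 : ℚ) ≤ 4 * (s ^ 3 + 9 * s ^ 2 + 18 * s + 8 + 6 * s * t + 2 * t + t ^ 2)
    + t * (2 * t - s) ^ 2 + 11 * s ^ 2 * t by positivity]

lemma sum_sdiff_invChoose_card_erase {C D U : Finset α} (hC : C.Nonempty) (hCD : Disjoint C D)
    (hU : C ∪ D ⊆ U) : ∑ u ∈ U \ D, invChoose #(C.erase u) #D = #U * invChoose #C #D := by
  have hCU : C ⊆ U \ D := fun w hw =>
    mem_sdiff.2 ⟨hU (mem_union_left _ hw), disjoint_left.1 hCD hw⟩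
  have hDU : D ⊆ U := subset_union_right.trans hU
  have hout : ∀ u ∈ (U \ D) \ C, invChoose #(C.erase u) #D = invChoose #C #D := fun u hu => by
    rw [erase_eq_of_notMem (mem_sdiff.1 hu).2]
  have hin : ∀ u ∈ C, invChoose #(C.erase u) #D = invChoose (#C - 1) #D := fun u hu => by
    rw [card_erase_of_mem hu]
  obtain ⟨c, hc⟩ : ∃ c, #C = c + 1 := ⟨#C - 1, by have := hC.card_pos; omega⟩
  have hcard : #((U \ D) \ C) + (c + 1) + #D = #U := by
    rw [← hc, card_sdiff_add_card_eq_card hCU, card_sdiff_add_card_eq_card hDU]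
  rw [← sum_sdiff hCU, sum_congr rfl hout, sum_congr rfl hin, sum_const, sum_const, nsmul_eq_mul,
    nsmul_eq_mul, hc, Nat.add_sub_cancel, ← hcard]
  push_cast
  linear_combination add_one_mul_invChoose c #D

lemma invChoose_card_le_erase_erase_half {A B : Finset α} {a b : α} (ha : a ∈ A)
    (hb : b ∈ B) : invChoose #A #B ≤ invChoose #(A.erase a) #(B.erase b) / 2 := by
  rw [← card_erase_add_one ha, ← card_erase_add_one hb]
  exact invChoose_add_one_add_one_le_half _ _

lemma invChoose_card_le_erase_erase_third {A B : Finset α} {a b : α} (ha : a ∈ A) (hb : b ∈ B)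
    (hA : (A.erase a).Nonempty) :
    invChoose #A #B ≤ invChoose #(A.erase a) #(B.erase b) / 3 := by
  rw [← card_erase_add_one ha, ← card_erase_add_one hb]
  exact invChoose_add_one_add_one_le_third hA.card_pos _

lemma card_sdiff_pair_add_two {B : Finset α} {x y : α} (hx : x ∈ B) (hy : y ∈ B)
    (hxy : x ≠ y) : #(B \ {x, y}) + 2 = #B := by
  rw [← card_pair hxy, card_sdiff_add_card_eq_card (insert_subset hx (singleton_subset_iff.2 hy))]

lemma invChoose_card_le_erase_sdiff_pair_third {A B : Finset α} {a x y : α} (ha : a ∈ A)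
    (hx : x ∈ B) (hy : y ∈ B) (hxy : x ≠ y) :
    invChoose #A #B ≤ invChoose #(A.erase a) #(B \ {x, y}) / 3 := by
  rw [← card_erase_add_one ha, ← card_sdiff_pair_add_two hx hy hxy]
  exact invChoose_add_one_add_two_le_third _ _

lemma invChoose_card_le_erase_sdiff_pair_quarter {A B : Finset α} {a x y : α} (ha : a ∈ A)
    (hx : x ∈ B) (hy : y ∈ B) (hxy : x ≠ y) (hA : (A.erase a).Nonempty) :
    invChoose #A #B ≤ invChoose #(A.erase a) #(B \ {x, y}) / 4 := by
  rw [← card_erase_add_one ha, ← card_sdiff_pair_add_two hx hy hxy]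
  exact invChoose_add_one_add_two_le_quarter hA.card_pos _

structure IsBollobasSystem (K : Finset ι) (C D : ι → Finset α) : Prop where
  disjoint : ∀ k ∈ K, Disjoint (C k) (D k)
  inter_nonempty : ∀ k ∈ K, ∀ l ∈ K, k ≠ l → (C k ∩ D l).Nonempty

namespace IsBollobasSystem

variable {K : Finset ι} {A B C D : ι → Finset α} {a b x y : α}

lemma mono (h : IsBollobasSystem K A B) {L : Finset ι} (hL : L ⊆ K)
    (hC : ∀ k ∈ L, C k ⊆ A k) (hD : ∀ k ∈ L, D k ⊆ B k)
    (hmem : ∀ k ∈ L, ∀ l ∈ L, k ≠ l → ∀ w ∈ A k, w ∈ B l → w ∈ C k ∧ w ∈ D l) :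
    IsBollobasSystem L C D where
  disjoint k hk := ((h.disjoint k (hL hk)).mono_left (hC k hk)).mono_right (hD k hk)
  inter_nonempty k hk l hl hkl := by
    obtain ⟨w, hw⟩ := h.inter_nonempty k (hL hk) l (hL hl) hkl
    rw [mem_inter] at hw
    exact ⟨w, mem_inter.2 (hmem k hk l hl hkl w hw.1 hw.2)⟩

lemma eq_of_eq_empty (h : IsBollobasSystem K C D) {k l : ι} (hk : k ∈ K) (hCk : C k = ∅)
    (hl : l ∈ K) : l = k := by
  by_contra hlk
  simpa [hCk] using h.inter_nonempty k hk l hl (Ne.symm hlk)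

lemma erase (h : IsBollobasSystem K C D) (u : α) :
    IsBollobasSystem (K.filter (u ∉ D ·)) (fun k => (C k).erase u) D :=
  h.mono (filter_subset _ _) (fun _ _ => erase_subset _ _) (fun _ _ => Subset.rfl)
    fun _ _ _ hl _ _ hwC hwD =>
      ⟨mem_erase.2 ⟨fun hwu => (mem_filter.1 hl).2 (hwu ▸ hwD), hwC⟩, hwD⟩

lemma sum_invChoose_le_one_of_subset (h : IsBollobasSystem K C D) {U : Finset α}
    (hU : ∀ k ∈ K, C k ∪ D k ⊆ U) : ∑ k ∈ K, invChoose #(C k) #(D k) ≤ 1 := by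
  induction U using Finset.strongInduction generalizing K C with
  | H U ih =>
  by_cases hempty : ∃ k ∈ K, C k = ∅
  · obtain ⟨k, hk, hCk⟩ := hempty
    rw [eq_singleton_iff_unique_mem.2 ⟨hk, fun l hl => h.eq_of_eq_empty hk hCk hl⟩,
      sum_singleton, hCk, card_empty, invChoose_zero_left]
  have hne : ∀ k ∈ K, (C k).Nonempty := fun k hk =>
    nonempty_iff_ne_empty.2 fun hCk => hempty ⟨k, hk, hCk⟩
  rcases K.eq_empty_or_nonempty with rfl | ⟨k₀, hk₀⟩
  · simp
  have hUpos : (0 : ℚ) < #U := by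
    obtain ⟨w, hw⟩ := hne k₀ hk₀
    exact_mod_cast card_pos.2 ⟨w, hU k₀ hk₀ (mem_union_left _ hw)⟩
  have hlocal : ∀ u ∈ U,
      ∑ k ∈ K.filter (u ∉ D ·), invChoose #((C k).erase u) #(D k) ≤ 1 := fun u hu =>
    ih (U.erase u) (erase_ssubset hu) (h.erase u) fun k hk => by
      rw [← erase_eq_of_notMem (mem_filter.1 hk).2, ← erase_union_distrib]
      exact erase_subset_erase u (hU k (mem_filter.1 hk).1)
  refine le_of_mul_le_mul_left ?_ hUpos
  -- double counting over the point `u ∈ U` that is deleted from `C k`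
  calc (#U : ℚ) * ∑ k ∈ K, invChoose #(C k) #(D k)
      = ∑ k ∈ K, ∑ u ∈ U \ D k, invChoose #((C k).erase u) #(D k) := by
        rw [mul_sum]
        exact sum_congr rfl fun k hk =>
          (sum_sdiff_invChoose_card_erase (hne k hk) (h.disjoint k hk) (hU k hk)).symm
    _ = ∑ u ∈ U, ∑ k ∈ K.filter (u ∉ D ·), invChoose #((C k).erase u) #(D k) :=
        sum_comm' fun _ _ => by simp only [mem_sdiff, mem_filter]; tauto
    _ ≤ ∑ u ∈ U, 1 := sum_le_sum hlocal
    _ = #U * 1 := by simp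

theorem sum_invChoose_le_one (h : IsBollobasSystem K C D) :
    ∑ k ∈ K, invChoose #(C k) #(D k) ≤ 1 :=
  h.sum_invChoose_le_one_of_subset fun _ hk => subset_biUnion_of_mem (fun k => C k ∪ D k) hk

lemma erase_nonempty (h : IsBollobasSystem K A B) (hbA : ∀ k ∈ K, b ∈ A k) {k l : ι}
    (hk : k ∈ K) (hl : l ∈ K) (hkl : k ≠ l) : ((A k).erase b).Nonempty := by
  obtain ⟨w, hw⟩ := h.inter_nonempty k hk l hl hkl
  rw [mem_inter] at hw
  have hwb : w ≠ b := fun hwb => disjoint_left.1 (h.disjoint l hl) (hbA l hl) (hwb ▸ hw.2)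
  exact ⟨w, mem_erase.2 ⟨hwb, hw.1⟩⟩

lemma sum_filter_notMem_le_inv (h : IsBollobasSystem K A B) (hbA : ∀ k ∈ K, b ∈ A k)
    (haB : ∀ k ∈ K, x ∉ B k → a ∈ B k) {c : ℚ} (hc : 0 ≤ c)
    (hfac : ∀ k ∈ K.filter (x ∉ B ·),
      invChoose #(A k) #(B k) ≤ invChoose #((A k).erase b) #((B k).erase a) / c) :
    ∑ k ∈ K.filter (x ∉ B ·), invChoose #(A k) #(B k) ≤ 1 / c := by
  have hsys : IsBollobasSystem (K.filter (x ∉ B ·)) (fun k => (A k).erase b)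
      (fun k => (B k).erase a) := by
    refine h.mono (filter_subset _ _) (fun _ _ => erase_subset _ _) (fun _ _ => erase_subset _ _)
      fun k hk l hl _ w hwA hwB => ⟨mem_erase.2 ⟨?_, hwA⟩, mem_erase.2 ⟨?_, hwB⟩⟩
    · rintro rfl
      exact disjoint_left.1 (h.disjoint l (mem_filter.1 hl).1) (hbA l (mem_filter.1 hl).1) hwB
    · rintro rfl
      obtain ⟨hkK, hkx⟩ := mem_filter.1 hk
      exact disjoint_left.1 (h.disjoint k hkK) hwA (haB k hkK hkx)
  calc _ ≤ (∑ k ∈ K.filter (x ∉ B ·), invChoose #((A k).erase b) #((B k).erase a)) / c :=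
        (sum_le_sum hfac).trans_eq (sum_div _ _ _).symm
    _ ≤ 1 / c := div_le_div_of_nonneg_right hsys.sum_invChoose_le_one hc

lemma sum_filter_mem_le (h : IsBollobasSystem K A B) (hbA : ∀ k ∈ K, b ∈ A k)
    (hxA : ∀ k ∈ K, x ∉ A k) (hyA : ∀ k ∈ K, y ∉ A k) {c : ℚ} (hc : 0 ≤ c)
    (hfac : ∀ k ∈ K.filter (x ∈ B ·),
      invChoose #(A k) #(B k) ≤ invChoose #((A k).erase b) #(B k \ {x, y}) / c) :
    ∑ k ∈ K.filter (x ∈ B ·), invChoose #(A k) #(B k)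
      ≤ (1 - ∑ k ∈ K.filter (x ∉ B ·), invChoose #(A k) #(B k)) / c := by
  let C k := if x ∈ B k then (A k).erase b else A k
  let D k := if x ∈ B k then B k \ {x, y} else B k
  have hsys : IsBollobasSystem K C D := by
    refine h.mono Subset.rfl (fun k _ => ?_) (fun k _ => ?_)
      fun k hk l hl _ w hwA hwB => ⟨?_, ?_⟩
    · dsimp only [C]; split_ifs; exacts [erase_subset _ _, Subset.rfl]
    · dsimp only [D]; split_ifs; exacts [sdiff_subset, Subset.rfl]
    · have hwb : w ≠ b := fun hwb => disjoint_left.1 (h.disjoint l hl) (hbA l hl) (hwb ▸ hwB)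
      dsimp only [C]; split_ifs; exacts [mem_erase.2 ⟨hwb, hwA⟩, hwA]
    · have hwx : w ≠ x := fun hwx => hxA k hk (hwx ▸ hwA)
      have hwy : w ≠ y := fun hwy => hyA k hk (hwy ▸ hwA)
      dsimp only [D]; split_ifs; exacts [by simp [hwB, hwx, hwy], hwB]
  have hCD : ∑ k ∈ K, invChoose #(C k) #(D k)
      = ∑ k ∈ K.filter (x ∈ B ·), invChoose #((A k).erase b) #(B k \ {x, y})
        + ∑ k ∈ K.filter (x ∉ B ·), invChoose #(A k) #(B k) := by
    rw [← sum_filter_add_sum_filter_not K (x ∈ B ·)]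
    congr 1 <;> refine sum_congr rfl fun k hk => ?_ <;> simp [C, D, (mem_filter.1 hk).2]
  calc _ ≤ (∑ k ∈ K.filter (x ∈ B ·), invChoose #((A k).erase b) #(B k \ {x, y})) / c :=
        (sum_le_sum hfac).trans_eq (sum_div _ _ _).symm
    _ ≤ _ := div_le_div_of_nonneg_right (by linarith [hsys.sum_invChoose_le_one]) hc

theorem sum_invChoose_le_half (h : IsBollobasSystem K A B) (hxy : x ≠ y)
    (hbA : ∀ k ∈ K, b ∈ A k) (hxA : ∀ k ∈ K, x ∉ A k) (hyA : ∀ k ∈ K, y ∉ A k)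
    (hyB : ∀ k ∈ K, x ∈ B k → y ∈ B k) (haB : ∀ k ∈ K, x ∉ B k → a ∈ B k) :
    ∑ k ∈ K, invChoose #(A k) #(B k) ≤ 1 / 2 := by
  rw [← sum_filter_add_sum_filter_not K (x ∈ B ·)]
  have h₁ : ∀ k ∈ K.filter (x ∉ B ·), b ∈ A k ∧ a ∈ B k := fun k hk =>
    ⟨hbA k (mem_filter.1 hk).1, haB k (mem_filter.1 hk).1 (mem_filter.1 hk).2⟩
  have h₂ : ∀ k ∈ K.filter (x ∈ B ·), b ∈ A k ∧ x ∈ B k ∧ y ∈ B k := fun k hk =>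
    ⟨hbA k (mem_filter.1 hk).1, (mem_filter.1 hk).2,
      hyB k (mem_filter.1 hk).1 (mem_filter.1 hk).2⟩
  have hne : ∀ k ∈ K.filter (x ∉ B ·), ∀ l ∈ K.filter (x ∈ B ·), k ≠ l :=
    fun k hk l hl hkl => (mem_filter.1 hk).2 (hkl ▸ (h₂ l hl).2.1)
  have hS₁ := h.sum_filter_notMem_le_inv hbA haB (by norm_num) fun k hk =>
    invChoose_card_le_erase_erase_half (h₁ k hk).1 (h₁ k hk).2
  have hS₂ := h.sum_filter_mem_le hbA hxA hyA (by norm_num) fun k hk =>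
    invChoose_card_le_erase_sdiff_pair_third (h₂ k hk).1 (h₂ k hk).2.1 (h₂ k hk).2.2 hxy
  set T₁ := K.filter (x ∉ B ·)
  set T₂ := K.filter (x ∈ B ·)
  rcases T₁.eq_empty_or_nonempty with hT₁ | ⟨l₁, hl₁⟩
  · rw [hT₁, sum_empty] at hS₂ ⊢
    linarith
  rcases T₂.eq_empty_or_nonempty with hT₂ | ⟨l₂, hl₂⟩
  · rw [hT₂, sum_empty]
    linarith
  have hS₁' := h.sum_filter_notMem_le_inv hbA haB (by norm_num) fun k hk =>
    invChoose_card_le_erase_erase_third (h₁ k hk).1 (h₁ k hk).2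
      (h.erase_nonempty hbA (filter_subset _ _ hk) (filter_subset _ _ hl₂) (hne k hk l₂ hl₂))
  have hS₂' := h.sum_filter_mem_le hbA hxA hyA (by norm_num) fun k hk =>
    invChoose_card_le_erase_sdiff_pair_quarter (h₂ k hk).1 (h₂ k hk).2.1 (h₂ k hk).2.2 hxy
      (h.erase_nonempty hbA (filter_subset _ _ hk) (filter_subset _ _ hl₁)
        (hne l₁ hl₁ k hk).symm)
  linarith

end IsBollobasSystem

lemma mem_iff_notMem_of_card_inter_pair {S : Finset α} {u v : α} (huv : u ≠ v)
    (h : #(S ∩ {u, v}) = 1) : u ∈ S ↔ v ∉ S := by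
  by_cases hu : u ∈ S <;> by_cases hv : v ∈ S <;>
    simp_all [inter_insert_of_mem, inter_insert_of_notMem, card_pair huv]

lemma exists_eq_pair_of_card_eq_two {S : Finset α} {u : α} (hS : #S = 2) (hu : u ∈ S) :
    ∃ v, S = {u, v} := by
  obtain ⟨v, hv⟩ := card_eq_one.1 (by rw [card_erase_of_mem hu, hS] : #(S.erase u) = 1)
  exact ⟨v, by rw [← insert_erase hu, hv]⟩

lemma eq_pair_of_card_eq_two {S : Finset α} {u v : α} (hS : #S = 2) (hu : u ∈ S) (hv : v ∈ S)
    (huv : u ≠ v) : S = {u, v} :=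
  (eq_of_subset_of_card_le (insert_subset hu (singleton_subset_iff.2 hv))
    (by rw [hS, card_pair huv])).symm

structure IsOneCrossIntersecting_s12 (I : Finset ι) (A B : ι → Finset α) : Prop where
  inter_eq_empty : ∀ i ∈ I, A i ∩ B i = ∅
  card_inter : ∀ i ∈ I, ∀ j ∈ I, i ≠ j → #(A i ∩ B j) = 1

namespace IsOneCrossIntersecting_s12

variable {I : Finset ι} {A B : ι → Finset α}

lemma swap (h : IsOneCrossIntersecting_s12 I A B) : IsOneCrossIntersecting_s12 I B A where
  inter_eq_empty i hi := by rw [inter_comm]; exact h.inter_eq_empty i hi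
  card_inter i hi j hj hij := by rw [inter_comm]; exact h.card_inter j hj i hi hij.symm

lemma isBollobasSystem (h : IsOneCrossIntersecting_s12 I A B) {K : Finset ι} (hK : K ⊆ I) :
    IsBollobasSystem K A B where
  disjoint k hk := disjoint_iff_inter_eq_empty.2 (h.inter_eq_empty k (hK hk))
  inter_nonempty k hk l hl hkl := card_pos.1 (by rw [h.card_inter k (hK hk) l (hK hl) hkl]; simp)

lemma notMem_of_mem (h : IsOneCrossIntersecting_s12 I A B) {k : ι} (hk : k ∈ I) {w : α}
    (hw : w ∈ A k) : w ∉ B k :=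
  disjoint_left.1 (disjoint_iff_inter_eq_empty.2 (h.inter_eq_empty k hk)) hw

lemma not_pair_subset (h : IsOneCrossIntersecting_s12 I A B) {l : ι} (hl : l ∈ I) {x y : α}
    (hxy : x ≠ y) (hx : x ∈ A l) (hy : y ∈ A l) {k : ι} (hk : k ∈ I) :
    ¬(x ∈ B k ∧ y ∈ B k) := by
  rintro ⟨hxB, hyB⟩
  rcases eq_or_ne l k with rfl | hlk
  · exact h.notMem_of_mem hl hx hxB
  · have := card_le_card (insert_subset (mem_inter.2 ⟨hx, hxB⟩)
      (singleton_subset_iff.2 (mem_inter.2 ⟨hy, hyB⟩)))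
    rw [card_pair hxy, h.card_inter l hl k hk hlk] at this
    omega

lemma exists_eq_pair (h : IsOneCrossIntersecting_s12 I A B) {i j : ι} (hi : i ∈ I) (hj : j ∈ I)
    (hij : i ≠ j) (hAi : #(A i) = 2) (hAj : #(A j) = 2) (hAint : (A i ∩ A j).Nonempty)
    (hBi : #(B i) = 2) (hBj : #(B j) = 2) (hBint : (B i ∩ B j).Nonempty) :
    ∃ a x y b, A i = {a, x} ∧ A j = {a, y} ∧ B i = {y, b} ∧ B j = {x, b} := by
  obtain ⟨a, haA⟩ := hAint
  obtain ⟨b, hbB⟩ := hBint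
  rw [mem_inter] at haA hbB
  obtain ⟨x, hx⟩ := exists_eq_pair_of_card_eq_two hAi haA.1
  obtain ⟨y, hy⟩ := exists_eq_pair_of_card_eq_two hAj haA.2
  have hax : a ≠ x := by rintro rfl; simp [hx] at hAi
  have hay : a ≠ y := by rintro rfl; simp [hy] at hAj
  have hyB : y ∈ B i := by
    by_contra hyB
    refine h.notMem_of_mem hi haA.1 ((mem_iff_notMem_of_card_inter_pair hay ?_).2 hyB)
    rw [inter_comm, ← hy]; exact h.card_inter j hj i hi hij.symm
  have hxB : x ∈ B j := by
    by_contra hxB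
    refine h.notMem_of_mem hj haA.2 ((mem_iff_notMem_of_card_inter_pair hax ?_).2 hxB)
    rw [inter_comm, ← hx]; exact h.card_inter i hi j hj hij
  have hyb : y ≠ b := by rintro rfl; exact h.notMem_of_mem hj (by simp [hy]) hbB.2
  have hxb : x ≠ b := by rintro rfl; exact h.notMem_of_mem hi (by simp [hx]) hbB.1
  exact ⟨a, x, y, b, hx, hy, eq_pair_of_card_eq_two hBi hyB hbB.1 hyb,
    eq_pair_of_card_eq_two hBj hxB hbB.2 hxb⟩

lemma ne_of_eq_pairs (h : IsOneCrossIntersecting_s12 I A B) {i j : ι} (hi : i ∈ I) (hj : j ∈ I)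
    {a x y b : α} (hAi : A i = {a, x}) (hAj : A j = {a, y}) (hBi : B i = {y, b})
    (hBj : B j = {x, b}) : x ≠ y ∧ x ≠ b ∧ y ≠ b ∧ a ≠ x ∧ a ≠ y := by
  refine ⟨?_, ?_, ?_, ?_, ?_⟩ <;> rintro rfl
  · exact h.notMem_of_mem hi (w := x) (by simp [hAi]) (by simp [hBi])
  · exact h.notMem_of_mem hi (w := x) (by simp [hAi]) (by simp [hBi])
  · exact h.notMem_of_mem hj (w := y) (by simp [hAj]) (by simp [hBj])
  · exact h.notMem_of_mem hj (w := a) (by simp [hAj]) (by simp [hBj])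
  · exact h.notMem_of_mem hi (w := a) (by simp [hAi]) (by simp [hBi])

theorem sum_sdiff_pair_le_half [DecidableEq ι] (h : IsOneCrossIntersecting_s12 I A B) {i j : ι}
    (hi : i ∈ I) (hj : j ∈ I) {a x y b : α} (hAi : A i = {a, x}) (hAj : A j = {a, y})
    (hBi : B i = {y, b}) (hBj : B j = {x, b}) (hA : ∀ k ∈ I \ {i, j}, ¬(x ∈ A k ∧ y ∈ A k)) :
    ∑ k ∈ I \ {i, j}, invChoose #(A k) #(B k) ≤ 1 / 2 := by
  obtain ⟨hxy, hxb, hyb, hax, hay⟩ := h.ne_of_eq_pairs hi hj hAi hAj hBi hBj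
  have hpairs : ∀ k ∈ I \ {i, j}, (y ∈ A k ↔ b ∉ A k) ∧ (x ∈ A k ↔ b ∉ A k) ∧
      (a ∈ B k ↔ x ∉ B k) ∧ (a ∈ B k ↔ y ∉ B k) := by
    intro k hk
    obtain ⟨hkI, hkij⟩ := mem_sdiff.1 hk
    obtain ⟨hki, hkj⟩ : k ≠ i ∧ k ≠ j := by simpa [not_or] using hkij
    refine ⟨mem_iff_notMem_of_card_inter_pair hyb ?_, mem_iff_notMem_of_card_inter_pair hxb ?_,
      mem_iff_notMem_of_card_inter_pair hax ?_, mem_iff_notMem_of_card_inter_pair hay ?_⟩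
    · rw [← hBi]; exact h.card_inter k hkI i hi hki
    · rw [← hBj]; exact h.card_inter k hkI j hj hkj
    · rw [inter_comm, ← hAi]; exact h.card_inter i hi k hkI hki.symm
    · rw [inter_comm, ← hAj]; exact h.card_inter j hj k hkI hkj.symm
  have hbA : ∀ k ∈ I \ {i, j}, b ∈ A k := fun k hk => by
    by_contra hb
    exact hA k hk ⟨(hpairs k hk).2.1.2 hb, (hpairs k hk).1.2 hb⟩
  refine (h.isBollobasSystem sdiff_subset).sum_invChoose_le_half (a := a) hxy hbA
    (fun k hk => ?_) (fun k hk => ?_) (fun k hk => ?_) (fun k hk => ?_) <;>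
  have := hpairs k hk <;> have := hbA k hk <;> tauto

end IsOneCrossIntersecting_s12

end

theorem stmt_12 {α : Type*} [DecidableEq α] {ι : Type*} (I : Finset ι)
    (A B : ι → Finset α)
    (hdisj : ∀ i ∈ I, A i ∩ B i = ∅)
    (hone : ∀ i ∈ I, ∀ j ∈ I, i ≠ j → (A i ∩ B j).card = 1)
    (i j : ι) (hi : i ∈ I) (hj : j ∈ I) (hij : i ≠ j)
    (hAi : (A i).card = 2) (hAj : (A j).card = 2) (hAint : (A i ∩ A j).Nonempty)
    (hBi : (B i).card = 2) (hBj : (B j).card = 2) (hBint : (B i ∩ B j).Nonempty) :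
    ∑ k ∈ I, (1 : ℚ) / (((A k).card + (B k).card).choose (A k).card) ≤ 5 / 6 := by
  classical
  have h : IsOneCrossIntersecting_s12 I A B := ⟨hdisj, hone⟩
  obtain ⟨a, x, y, b, hAi', hAj', hBi', hBj'⟩ :=
    h.exists_eq_pair hi hj hij hAi hAj hAint hBi hBj hBint
  have hrest : ∑ k ∈ I \ {i, j}, invChoose #(A k) #(B k) ≤ 1 / 2 := by
    by_cases hA : ∀ k ∈ I \ {i, j}, ¬(x ∈ A k ∧ y ∈ A k)
    · exact h.sum_sdiff_pair_le_half hi hj hAi' hAj' hBi' hBj' hA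
    -- otherwise no `B k` contains both `x` and `y`, and the roles of `A` and `B` can be swapped
    obtain ⟨l, hl, hxl, hyl⟩ : ∃ l ∈ I \ {i, j}, x ∈ A l ∧ y ∈ A l := by
      simpa only [not_forall, not_not, exists_prop] using hA
    have hxy : x ≠ y := (h.ne_of_eq_pairs hi hj hAi' hAj' hBi' hBj').1
    simp_rw [invChoose_comm #(A _)]
    refine h.swap.sum_sdiff_pair_le_half hi hj (a := b) (x := y) (y := x) (b := a)
      (by rw [hBi', pair_comm]) (by rw [hBj', pair_comm]) (by rw [hAi', pair_comm])
      (by rw [hAj', pair_comm]) fun k hk hB => ?_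
    exact h.not_pair_subset (sdiff_subset hl) hxy hxl hyl (sdiff_subset hk) hB.symm
  change ∑ k ∈ I, invChoose #(A k) #(B k) ≤ 5 / 6
  rw [← sum_sdiff (insert_subset hi (singleton_subset_iff.2 hj)), sum_pair hij, hAi, hAj, hBi,
    hBj]
  norm_num [invChoose, Nat.choose] at hrest ⊢
  linarith
end
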